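/- arXiv:1512.08628 — 7 statements merged into one kernel-verified Lean document; each statement's English description precedes it below -/
import Mathlib

section
/- For any subset A of a Banach lattice X, the closed sublattice generated by A equals the closure of span(A)^{∨∧}, where span(A)^{∨∧} denotes the set of finite infima of finite suprema of elements of span(A). -/
open Filter Topology Set

section Defs

variable {E : Type*} [NormedAddCommGroup E] [NormedSpace ℝ E]

/-- A set is weakly compact if it is compact in the weak topology. -/
def WeaklyCompact (K : Set E) : Prop := IsCompact (toWeakSpace ℝ E '' K)

/-- A set is weakly precompact if every sequence in it has a weakly Cauchy subsequence. -/
def WeaklyPrecompact (K : Set E) : Prop :=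
  ∀ x : ℕ → E, (∀ n, x n ∈ K) → ∃ φ : ℕ → ℕ, StrictMono φ ∧
    ∀ f : E →L[ℝ] ℝ, ∃ l : ℝ, Tendsto (fun n => f (x (φ n))) atTop (𝓝 l)

end Defs

section LatDefs

variable {E : Type*} [NormedAddCommGroup E] [Lattice E] [NormedSpace ℝ E]

/-- A closed sublattice: a closed linear subspace closed under `⊔` and `⊓`. -/
def IsClosedSublattice (S : Set E) : Prop :=
  IsClosed S ∧ (0 : E) ∈ S ∧ (∀ x ∈ S, ∀ y ∈ S, x + y ∈ S) ∧
    (∀ c : ℝ, ∀ x ∈ S, c • x ∈ S) ∧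
    (∀ x ∈ S, ∀ y ∈ S, x ⊔ y ∈ S) ∧ (∀ x ∈ S, ∀ y ∈ S, x ⊓ y ∈ S)

/-- `L(A)`: the smallest closed sublattice containing `A`. -/
def sublatticeGen (A : Set E) : Set E := ⋂₀ {S | IsClosedSublattice S ∧ A ⊆ S}

/-- The solid hull of a set. -/
def solidHull (A : Set E) : Set E := ⋃ x ∈ A, Set.Icc (-|x|) |x|

/-- A closed ideal: a closed linear subspace which is solid. -/
def IsClosedIdeal (S : Set E) : Prop :=
  IsClosed S ∧ (0 : E) ∈ S ∧ (∀ x ∈ S, ∀ y ∈ S, x + y ∈ S) ∧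
    (∀ c : ℝ, ∀ x ∈ S, c • x ∈ S) ∧
    (∀ x : E, ∀ y ∈ S, |x| ≤ |y| → x ∈ S)

/-- `I(A)`: the smallest closed ideal containing `A`. -/
def idealGen (A : Set E) : Set E := ⋂₀ {S | IsClosedIdeal S ∧ A ⊆ S}

/-- A band: a closed ideal closed under existing suprema. -/
def IsBand (S : Set E) : Prop :=
  IsClosedIdeal S ∧ ∀ D ⊆ S, ∀ x : E, IsLUB D x → x ∈ S

/-- `B(A)`: the smallest band containing `A`. -/
def bandGen (A : Set E) : Set E := ⋂₀ {S | IsBand S ∧ A ⊆ S}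

/-- Disjoint complement of a set. -/
def disjComplement (A : Set E) : Set E := {x : E | ∀ y ∈ A, |x| ⊓ |y| = 0}

end LatDefs

/-- Order continuity of the norm: every downward directed set with infimum `0`
has norms converging to `0` along the order. -/
def OrderContinuousBL (E : Type*) [NormedAddCommGroup E] [Lattice E] : Prop :=
  ∀ D : Set E, D.Nonempty → DirectedOn (· ≥ ·) D → IsGLB D 0 →
    ∀ ε > 0, ∃ d ∈ D, ∀ e ∈ D, e ≤ d → ‖e‖ < ε

/-- Density character of a topological space. -/
noncomputable def densChar (T : Type*) [TopologicalSpace T] : Cardinal :=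
  sInf {c : Cardinal | ∃ s : Set T, Dense s ∧ Cardinal.mk s = c}

/-- Finite suprema of elements of a set. -/
def finSups {E : Type*} [NormedAddCommGroup E] [Lattice E] [NormedSpace ℝ E] (A : Set E) : Set E :=
  {x | ∃ (s : Finset E) (hs : s.Nonempty), ↑s ⊆ A ∧ s.sup' hs id = x}

/-- Finite infima of elements of a set. -/
def finInfs {E : Type*} [NormedAddCommGroup E] [Lattice E] [NormedSpace ℝ E] (A : Set E) : Set E :=
  {x | ∃ (s : Finset E) (hs : s.Nonempty), ↑s ⊆ A ∧ s.inf' hs id = x}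

/-! In an abelian lattice-ordered group the finite infima of finite suprema of a set form the
sublattice it generates, and when the set is a subspace `V` this sublattice `W` is again an
additive subgroup, because translations are lattice automorphisms and negation is a lattice
anti-automorphism. Positive real scalars are not assumed to act monotonically, but halving is a
lattice automorphism, since `2 • (x ⊔ y) = 2 • x ⊔ 2 • y` holds in every lattice-ordered group.
So the real scalars preserving `W` form a subring containing `1/2`, which is dense in `ℝ`, and
the closure of `W` is a closed subspace; by continuity of `⊔` and `⊓` it is a sublattice. -/

section LatticeClosure

variable {α β : Type*} [Lattice α] [Lattice β] {f : α → β} {s : Set α} {t : Set β}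

lemma mapsTo_latticeClosure (map_sup : ∀ a b, f (a ⊔ b) = f a ⊔ f b)
    (map_inf : ∀ a b, f (a ⊓ b) = f a ⊓ f b) (h : MapsTo f s (latticeClosure t)) :
    MapsTo f (latticeClosure s) (latticeClosure t) := by
  rw [mapsTo_iff_image_subset, image_latticeClosure s f map_sup map_inf]
  exact (latticeClosure_mono h.image_subset).trans (latticeClosure_idem t).le

lemma mapsTo_latticeClosure' (map_sup : ∀ a b, f (a ⊔ b) = f a ⊓ f b)
    (map_inf : ∀ a b, f (a ⊓ b) = f a ⊔ f b) (h : MapsTo f s (latticeClosure t)) :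
    MapsTo f (latticeClosure s) (latticeClosure t) := by
  rw [mapsTo_iff_image_subset, image_latticeClosure' s f map_sup map_inf]
  exact (latticeClosure_mono h.image_subset).trans (latticeClosure_idem t).le

lemma IsSublattice.closure [TopologicalSpace α] [TopologicalLattice α] (hs : IsSublattice s) :
    IsSublattice (closure s) :=
  ⟨fun _ ha _ hb ↦ map_mem_closure₂ continuous_sup ha hb fun _ ha' _ hb' ↦ hs.supClosed ha' hb',
    fun _ ha _ hb ↦ map_mem_closure₂ continuous_inf ha hb fun _ ha' _ hb' ↦ hs.infClosed ha' hb'⟩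

end LatticeClosure

section LatticeOrderedGroup

variable {G : Type*} [Lattice G] [AddCommGroup G] [IsOrderedAddMonoid G]

lemma add_mem_latticeClosure {H : AddSubgroup G} {x y : G} (hx : x ∈ latticeClosure (H : Set G))
    (hy : y ∈ latticeClosure (H : Set G)) : x + y ∈ latticeClosure (H : Set G) := by
  have add_right : ∀ v ∈ H, MapsTo (· + v) (latticeClosure (H : Set G)) (latticeClosure H) :=
    fun v hv ↦ mapsTo_latticeClosure (fun _ _ ↦ sup_add ..) (fun _ _ ↦ inf_add ..)
      fun _ ha ↦ subset_latticeClosure (H.add_mem ha hv)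
  exact mapsTo_latticeClosure (fun _ _ ↦ add_sup ..) (fun _ _ ↦ add_inf ..)
    (fun _ hv ↦ add_right _ hv hx) hy

lemma neg_mem_latticeClosure {H : AddSubgroup G} {x : G} (hx : x ∈ latticeClosure (H : Set G)) :
    -x ∈ latticeClosure (H : Set G) :=
  mapsTo_latticeClosure' (fun _ _ ↦ neg_sup ..) (fun _ _ ↦ neg_inf ..)
    (fun _ ha ↦ subset_latticeClosure (H.neg_mem ha)) hx

def AddSubgroup.latticeClosure (H : AddSubgroup G) : AddSubgroup G where
  carrier := _root_.latticeClosure H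
  zero_mem' := subset_latticeClosure H.zero_mem
  add_mem' := add_mem_latticeClosure
  neg_mem' := neg_mem_latticeClosure

lemma two_nsmul_sup (x y : G) : 2 • (x ⊔ y) = 2 • x ⊔ 2 • y := by
  rw [two_nsmul_sup_eq_add_add_abs_sub, abs, add_sup, two_nsmul, two_nsmul, sup_comm]
  congr 1 <;> abel

variable [Module ℝ G]

lemma inv_two_smul_sup (x y : G) : (2⁻¹ : ℝ) • (x ⊔ y) = (2⁻¹ : ℝ) • x ⊔ (2⁻¹ : ℝ) • y := by
  have h : ∀ z : G, z = 2 • (2⁻¹ : ℝ) • z := fun z ↦ by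
    rw [← Nat.cast_smul_eq_nsmul ℝ, smul_smul]; norm_num
  conv_lhs => rw [h x, h y, ← two_nsmul_sup]
  rw [← Nat.cast_smul_eq_nsmul ℝ, smul_smul]
  norm_num

lemma inv_two_smul_inf (x y : G) : (2⁻¹ : ℝ) • (x ⊓ y) = (2⁻¹ : ℝ) • x ⊓ (2⁻¹ : ℝ) • y := by
  rw [← neg_neg (x ⊓ y), neg_inf, smul_neg, inv_two_smul_sup, neg_sup, smul_neg, smul_neg,
    neg_neg, neg_neg]

lemma inv_two_smul_mem_latticeClosure {V : Submodule ℝ G} {x : G}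
    (hx : x ∈ latticeClosure (V : Set G)) : (2⁻¹ : ℝ) • x ∈ latticeClosure (V : Set G) :=
  mapsTo_latticeClosure inv_two_smul_sup inv_two_smul_inf
    (fun _ ha ↦ subset_latticeClosure (V.smul_mem _ ha)) hx

end LatticeOrderedGroup

def AddSubgroup.smulStabilizer (R : Type*) {M : Type*} [Ring R] [AddCommGroup M] [Module R M]
    (W : AddSubgroup M) : Subring R where
  carrier := {c | ∀ x ∈ W, c • x ∈ W}
  one_mem' x hx := by rwa [one_smul]
  mul_mem' ha hb x hx := by simpa [mul_smul] using ha _ (hb x hx)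
  zero_mem' x _ := by rw [zero_smul]; exact W.zero_mem
  add_mem' ha hb x hx := by simpa [add_smul] using W.add_mem (ha x hx) (hb x hx)
  neg_mem' ha x hx := by simpa [neg_smul] using W.neg_mem (ha x hx)

lemma Subring.dense_of_inv_two_mem (S : Subring ℝ) (h : (2⁻¹ : ℝ) ∈ S) : Dense (S : Set ℝ) := by
  refine S.toAddSubgroup.dense_of_not_isolated_zero fun ε hε ↦ ?_
  obtain ⟨k, hk⟩ := exists_pow_lt_of_lt_one hε (by norm_num : (2⁻¹ : ℝ) < 1)
  exact ⟨_, S.pow_mem h k, by positivity, hk⟩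

lemma smul_mem_closure_of_inv_two_smul_mem {E : Type*} [AddCommGroup E] [Module ℝ E]
    [TopologicalSpace E] [ContinuousSMul ℝ E] {W : AddSubgroup E}
    (hW : ∀ x ∈ W, (2⁻¹ : ℝ) • x ∈ W) (c : ℝ) {x : E} (hx : x ∈ closure (W : Set E)) :
    c • x ∈ closure (W : Set E) := by
  have hdense := (W.smulStabilizer ℝ).dense_of_inv_two_mem hW
  have : closure (W.smulStabilizer ℝ : Set ℝ) ⊆ {c : ℝ | c • x ∈ closure (W : Set E)} :=
    closure_minimal (fun c hc ↦ map_mem_closure (continuous_const_smul c) hx hc)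
      (isClosed_closure.preimage (continuous_id.smul continuous_const))
  exact this (hdense c)

section ClosedSublattice

variable {E : Type*} [NormedAddCommGroup E] [Lattice E] [NormedSpace ℝ E]

lemma finInfs_finSups_eq_latticeClosure [IsOrderedAddMonoid E] (s : Set E) :
    finInfs (finSups s) = latticeClosure s :=
  letI : DistribLattice E := AddCommGroup.toDistribLattice E
  infClosure_supClosure s

lemma isClosedSublattice_closure_latticeClosure [IsOrderedAddMonoid E] [HasSolidNorm E]
    (V : Submodule ℝ E) :
    IsClosedSublattice (closure (latticeClosure (V : Set E))) := by
  let W := V.toAddSubgroup.latticeClosure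
  have hW : IsSublattice (closure (latticeClosure (V : Set E))) :=
    isSublattice_latticeClosure.closure
  exact ⟨isClosed_closure, W.topologicalClosure.zero_mem,
    fun _ hx _ hy ↦ W.topologicalClosure.add_mem hx hy,
    fun c _ hx ↦ smul_mem_closure_of_inv_two_smul_mem (W := W)
      (fun _ ↦ inv_two_smul_mem_latticeClosure) c hx,
    fun _ hx _ hy ↦ hW.supClosed hx hy, fun _ hx _ hy ↦ hW.infClosed hx hy⟩

lemma IsClosedSublattice.closure_latticeClosure_span_subset {S A : Set E}
    (hS : IsClosedSublattice S) (hAS : A ⊆ S) :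
    closure (latticeClosure (Submodule.span ℝ A : Set E)) ⊆ S := by
  obtain ⟨hS_closed, hS_zero, hS_add, hS_smul, hS_sup, hS_inf⟩ := hS
  let P : Submodule ℝ E :=
    { carrier := S
      zero_mem' := hS_zero
      add_mem' := fun {x y} hx hy ↦ hS_add x hx y hy
      smul_mem' := fun c x hx ↦ hS_smul c x hx }
  have hspan : (Submodule.span ℝ A : Set E) ⊆ S := Submodule.span_le (p := P) |>.2 hAS
  exact closure_minimal (latticeClosure_min hspan
    ⟨fun x hx y hy ↦ hS_sup x hx y hy, fun x hx y hy ↦ hS_inf x hx y hy⟩) hS_closed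

end ClosedSublattice

theorem sublatticeGen_eq_closure_finInfs_finSups_span_general
    {X : Type*} [NormedAddCommGroup X] [Lattice X] [IsOrderedAddMonoid X] [HasSolidNorm X]
      [NormedSpace ℝ X]
    (A : Set X) :
    sublatticeGen A =
      closure (finInfs (finSups ((Submodule.span ℝ A : Submodule ℝ X) : Set X))) := by
  rw [finInfs_finSups_eq_latticeClosure]
  refine subset_antisymm
    (sInter_subset_of_mem ⟨isClosedSublattice_closure_latticeClosure _, ?_⟩) (subset_sInter ?_)
  · exact Submodule.subset_span.trans (subset_latticeClosure.trans subset_closure)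
  · rintro S ⟨hS, hAS⟩
    exact hS.closure_latticeClosure_span_subset hAS

/-- L(A) = closure of span(A)^{∨∧}. -/
theorem sublatticeGen_eq_closure_finInfs_finSups_span
    {X : Type*} [NormedAddCommGroup X] [Lattice X] [IsOrderedAddMonoid X] [HasSolidNorm X]
      [NormedSpace ℝ X] [CompleteSpace X]
    (A : Set X) :
    sublatticeGen A =
      closure (finInfs (finSups ((Submodule.span ℝ A : Submodule ℝ X) : Set X))) :=
  sublatticeGen_eq_closure_finInfs_finSups_span_general A
end

section
/- If T : X → Y is a lattice homomorphism between Banach lattices with dense range and K ⊆ X is a set with L(K) = X, then L(T(K)) = Y. Consequently, a lattice-homomorphic dense-range image of an LWCG Banach lattice is LWCG. -/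
open Filter Topology Set

/-- Lattice-ordered groups satisfy `x ⊓ y = x + y - x ⊔ y`. -/
theorem map_inf_of_map_sup {G H F : Type*} [AddCommGroup G] [Lattice G] [IsOrderedAddMonoid G]
    [AddCommGroup H] [Lattice H] [IsOrderedAddMonoid H] [FunLike F G H] [AddMonoidHomClass F G H]
    (f : F) (hsup : ∀ x y, f (x ⊔ y) = f x ⊔ f y) (x y : G) : f (x ⊓ y) = f x ⊓ f y := by
  have hG : x ⊓ y = x + y - x ⊔ y := eq_sub_of_add_eq (inf_add_sup x y)
  rw [hG, map_sub, map_add, hsup, eq_comm, eq_sub_iff_add_eq, inf_add_sup]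

section Sublattice

variable {X Y : Type*} [NormedAddCommGroup X] [Lattice X] [IsOrderedAddMonoid X] [NormedSpace ℝ X]
  [NormedAddCommGroup Y] [Lattice Y] [IsOrderedAddMonoid Y] [NormedSpace ℝ Y]

theorem IsClosedSublattice.preimage {S : Set Y} (hS : IsClosedSublattice S) (T : X →L[ℝ] Y)
    (hsup : ∀ x y : X, T (x ⊔ y) = T x ⊔ T y) : IsClosedSublattice (T ⁻¹' S) := by
  obtain ⟨hclosed, hzero, hadd, hsmul, hsupS, hinfS⟩ := hS
  refine ⟨hclosed.preimage T.continuous, by simpa using hzero, ?_, ?_, ?_, ?_⟩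
  · intro x hx y hy
    simpa only [mem_preimage, map_add] using hadd _ hx _ hy
  · intro c x hx
    simpa only [mem_preimage, map_smul] using hsmul c _ hx
  · intro x hx y hy
    simpa only [mem_preimage, hsup] using hsupS _ hx _ hy
  · intro x hx y hy
    simpa only [mem_preimage, map_inf_of_map_sup T hsup] using hinfS _ hx _ hy

/-- A closed sublattice containing `T(K)` pulls back to one containing `K`, hence to all of `X`;
it then contains the dense set `range T` and, being closed, all of `Y`. -/
theorem sublatticeGen_image_eq_univ (T : X →L[ℝ] Y) (hsup : ∀ x y : X, T (x ⊔ y) = T x ⊔ T y)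
    (hdense : DenseRange T) {K : Set X} (hK : sublatticeGen K = univ) :
    sublatticeGen (T '' K) = univ := by
  refine sInter_eq_univ.2 fun S ⟨hS, hTK⟩ => ?_
  have hpre : sublatticeGen K ⊆ T ⁻¹' S :=
    sInter_subset_of_mem ⟨hS.preimage T hsup, image_subset_iff.1 hTK⟩
  have hrange : range T ⊆ S := by
    rintro _ ⟨x, rfl⟩
    exact hpre (hK ▸ mem_univ x)
  exact eq_univ_of_univ_subset <| hdense.closure_range ▸ hS.1.closure_subset_iff.2 hrange

end Sublattice

theorem WeaklyCompact.image {X Y : Type*} [NormedAddCommGroup X] [NormedSpace ℝ X]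
    [NormedAddCommGroup Y] [NormedSpace ℝ Y] {K : Set X} (hK : WeaklyCompact K) (T : X →L[ℝ] Y) :
    WeaklyCompact (T '' K) := by
  have himg : toWeakSpace ℝ Y '' (T '' K) = WeakSpace.map T '' (toWeakSpace ℝ X '' K) := by
    simp only [image_image]
    rfl
  rw [WeaklyCompact, himg]
  exact IsCompact.image hK (WeakSpace.map T).continuous

theorem latticeHom_denseRange_LWCG_general
    {X Y : Type*} [NormedAddCommGroup X] [Lattice X] [IsOrderedAddMonoid X] [NormedSpace ℝ X]
    [NormedAddCommGroup Y] [Lattice Y] [IsOrderedAddMonoid Y] [NormedSpace ℝ Y]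
    (T : X →L[ℝ] Y) (hlat : ∀ x y : X, T (x ⊔ y) = T x ⊔ T y)
    (hdense : DenseRange T) :
    (∀ K : Set X, sublatticeGen K = Set.univ → sublatticeGen (T '' K) = Set.univ) ∧
    ((∃ K : Set X, WeaklyCompact K ∧ sublatticeGen K = Set.univ) →
      ∃ K' : Set Y, WeaklyCompact K' ∧ sublatticeGen K' = Set.univ) :=
  ⟨fun _ hK => sublatticeGen_image_eq_univ T hlat hdense hK,
    fun ⟨K, hKc, hKgen⟩ => ⟨T '' K, hKc.image T, sublatticeGen_image_eq_univ T hlat hdense hKgen⟩⟩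

/-- a dense-range lattice homomorphism sends lattice-generating sets to
lattice-generating sets; consequently, such an image of an LWCG lattice is LWCG. -/
theorem latticeHom_denseRange_LWCG
    {X Y : Type*} [NormedAddCommGroup X] [Lattice X] [IsOrderedAddMonoid X] [HasSolidNorm X] [NormedSpace ℝ X] [CompleteSpace X]
    [NormedAddCommGroup Y] [Lattice Y] [IsOrderedAddMonoid Y] [HasSolidNorm Y] [NormedSpace ℝ Y] [CompleteSpace Y]
    (T : X →L[ℝ] Y) (hlat : ∀ x y : X, T (x ⊔ y) = T x ⊔ T y)
    (hdense : DenseRange T) :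
    (∀ K : Set X, sublatticeGen K = Set.univ → sublatticeGen (T '' K) = Set.univ) ∧
    ((∃ K : Set X, WeaklyCompact K ∧ sublatticeGen K = Set.univ) →
      ∃ K' : Set Y, WeaklyCompact K' ∧ sublatticeGen K' = Set.univ) :=
  latticeHom_denseRange_LWCG_general T hlat hdense
end

section
/- A Banach lattice X has a quasi-interior point if and only if X = I(C) for some separable subset C ⊆ X, and X has a weak order unit if and only if X = B(C) for some separable subset C ⊆ X. -/
open Filter Topology Set

/-! Given a separable `C`, take a sequence `f` whose closed range contains `C` and put
`u = ∑ |cₙ • fₙ|` with nonzero scalars `cₙ` small enough for the series to converge. Then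
`|cₙ • fₙ| ≤ u`, so every `fₙ`, hence all of `C`, lies in the closed ideal generated by `u`.
A band is a closed ideal, so `u` also generates a band containing `C`. -/

section Generated

variable {E : Type*} [NormedAddCommGroup E] [Lattice E] [NormedSpace ℝ E]

lemma isClosedIdeal_idealGen (A : Set E) : IsClosedIdeal (idealGen A) := by
  refine ⟨isClosed_sInter fun S hS => hS.1.1, ?_, ?_, ?_, ?_⟩
  · exact mem_sInter.2 fun S hS => hS.1.2.1
  · exact fun x hx y hy => mem_sInter.2 fun S hS => hS.1.2.2.1 x (hx S hS) y (hy S hS)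
  · exact fun c x hx => mem_sInter.2 fun S hS => hS.1.2.2.2.1 c x (hx S hS)
  · exact fun x y hy hxy => mem_sInter.2 fun S hS => hS.1.2.2.2.2 x y (hy S hS) hxy

lemma idealGen_subset {A S : Set E} (hS : IsClosedIdeal S) (hAS : A ⊆ S) : idealGen A ⊆ S :=
  sInter_subset_of_mem ⟨hS, hAS⟩

lemma isBand_bandGen (A : Set E) : IsBand (bandGen A) := by
  refine ⟨⟨isClosed_sInter fun S hS => hS.1.1.1, ?_, ?_, ?_, ?_⟩, ?_⟩
  · exact mem_sInter.2 fun S hS => hS.1.1.2.1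
  · exact fun x hx y hy => mem_sInter.2 fun S hS => hS.1.1.2.2.1 x (hx S hS) y (hy S hS)
  · exact fun c x hx => mem_sInter.2 fun S hS => hS.1.1.2.2.2.1 c x (hx S hS)
  · exact fun x y hy hxy => mem_sInter.2 fun S hS => hS.1.1.2.2.2.2 x y (hy S hS) hxy
  · exact fun D hD x hx => mem_sInter.2 fun S hS => hS.1.2 D (fun d hd => hD hd S hS) x hx

lemma subset_bandGen (A : Set E) : A ⊆ bandGen A :=
  fun _ ha => mem_sInter.2 fun _ hS => hS.2 ha

lemma bandGen_subset {A S : Set E} (hS : IsBand S) (hAS : A ⊆ S) : bandGen A ⊆ S :=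
  sInter_subset_of_mem ⟨hS, hAS⟩

lemma idealGen_subset_bandGen (A : Set E) : idealGen A ⊆ bandGen A :=
  idealGen_subset (isBand_bandGen A).1 (subset_bandGen A)

end Generated

lemma TopologicalSpace.IsSeparable.exists_subset_closure_range {α : Type*} [TopologicalSpace α]
    [Nonempty α] {s : Set α} (hs : IsSeparable s) : ∃ f : ℕ → α, s ⊆ closure (range f) := by
  obtain ⟨c, hc, hsc⟩ := hs
  obtain ⟨f, hcf⟩ := countable_iff_exists_subset_range.1 hc
  exact ⟨f, hsc.trans (closure_mono hcf)⟩

lemma norm_smul_inv_two_pow_mul_le {E : Type*} [SeminormedAddCommGroup E] [NormedSpace ℝ E]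
    (x : E) (n : ℕ) : ‖((2 : ℝ) ^ n * (‖x‖ + 1))⁻¹ • x‖ ≤ (1 / 2 : ℝ) ^ n := by
  have hx : 0 < ‖x‖ + 1 := by positivity
  rw [norm_smul, norm_inv, Real.norm_of_nonneg (by positivity), mul_inv, one_div, inv_pow,
    mul_assoc]
  exact mul_le_of_le_one_right (by positivity)
    ((inv_mul_le_one₀ hx).2 (le_add_of_nonneg_right zero_le_one))

section Lattice

variable {X : Type*} [NormedAddCommGroup X] [Lattice X] [HasSolidNorm X] [IsOrderedAddMonoid X]
  [NormedSpace ℝ X]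

lemma range_subset_idealGen_tsum_abs_smul (f : ℕ → X) {c : ℕ → ℝ} (hc : ∀ n, c n ≠ 0)
    (hs : Summable fun n => |c n • f n|) :
    range f ⊆ idealGen {∑' n, |c n • f n|} := by
  obtain ⟨-, -, -, hsmul, hsolid⟩ := isClosedIdeal_idealGen ({∑' n, |c n • f n|} : Set X)
  rintro _ ⟨n, rfl⟩
  have hle : |c n • f n| ≤ |(∑' m, |c m • f m|)| :=
    (hs.le_tsum n fun m _ => abs_nonneg _).trans (le_abs_self _)
  have hcf : c n • f n ∈ idealGen {∑' n, |c n • f n|} :=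
    hsolid _ _ (mem_sInter.2 fun _ hS => hS.2 rfl) hle
  simpa [inv_smul_smul₀ (hc n)] using hsmul (c n)⁻¹ _ hcf

lemma TopologicalSpace.IsSeparable.exists_nonneg_subset_idealGen_singleton [CompleteSpace X]
    {C : Set X} (hC : IsSeparable C) : ∃ u : X, 0 ≤ u ∧ C ⊆ idealGen {u} := by
  obtain ⟨f, hCf⟩ := hC.exists_subset_closure_range
  set c : ℕ → ℝ := fun n => ((2 : ℝ) ^ n * (‖f n‖ + 1))⁻¹
  have hc : ∀ n, c n ≠ 0 := fun n => inv_ne_zero (by positivity)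
  have hs : Summable fun n => |c n • f n| :=
    .of_norm_bounded summable_geometric_two fun n => by
      rw [norm_abs_eq_norm]; exact norm_smul_inv_two_pow_mul_le (f n) n
  refine ⟨∑' n, |c n • f n|, tsum_nonneg fun _ => abs_nonneg _, hCf.trans ?_⟩
  exact (isClosedIdeal_idealGen _).1.closure_subset_iff.2
    (range_subset_idealGen_tsum_abs_smul f hc hs)

end Lattice

/-- X has a quasi-interior point iff X = I(C) for some separable C,
and X has a weak order unit iff X = B(C) for some separable C. -/
theorem quasiInterior_and_weakOrderUnit_iff_separably_generated
    {X : Type*} [NormedAddCommGroup X] [Lattice X] [HasSolidNorm X] [IsOrderedAddMonoid X]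
      [NormedSpace ℝ X] [CompleteSpace X] :
    ((∃ u : X, 0 ≤ u ∧ idealGen ({u} : Set X) = Set.univ) ↔
      (∃ C : Set X, TopologicalSpace.IsSeparable C ∧ idealGen C = Set.univ)) ∧
    ((∃ u : X, 0 ≤ u ∧ bandGen ({u} : Set X) = Set.univ) ↔
      (∃ C : Set X, TopologicalSpace.IsSeparable C ∧ bandGen C = Set.univ)) := by
  refine ⟨⟨?_, ?_⟩, ⟨?_, ?_⟩⟩
  · rintro ⟨u, -, hu⟩
    exact ⟨{u}, (countable_singleton u).isSeparable, hu⟩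
  · rintro ⟨C, hC, hCX⟩
    obtain ⟨u, hu, hCu⟩ := hC.exists_nonneg_subset_idealGen_singleton
    exact ⟨u, hu, eq_univ_of_univ_subset (hCX ▸ idealGen_subset (isClosedIdeal_idealGen _) hCu)⟩
  · rintro ⟨u, -, hu⟩
    exact ⟨{u}, (countable_singleton u).isSeparable, hu⟩
  · rintro ⟨C, hC, hCX⟩
    obtain ⟨u, hu, hCu⟩ := hC.exists_nonneg_subset_idealGen_singleton
    exact ⟨u, hu, eq_univ_of_univ_subset
      (hCX ▸ bandGen_subset (isBand_bandGen _) (hCu.trans (idealGen_subset_bandGen _)))⟩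
end

section
/- If X is an LWCG Banach lattice, then the density character of X equals the density character of (X*, w*). -/
open Filter Topology Set

/-!
The inequality `dens (X*, w*) ≤ dens X` holds in every normed space: norming functionals of a
dense set separate the points of `X`, so their span is weak*-dense, and so is their rational span,
which is no larger.

Conversely, a weak*-dense set of `κ` functionals separates the points of `X` and therefore embeds
the weakly compact set `K` into `ℝ^κ`; hence `K` has a weakly dense subset `D` of size at most
`max κ ℵ₀`. The norm closure of the rational vector sublattice generated by `D` is a closed
sublattice, and being convex it is weakly closed, so it contains `K` and thus `L(K) = X`.
-/

open Cardinal

universe u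

section DensChar

variable {T : Type*} [TopologicalSpace T]

lemma densChar_le_mk {s : Set T} (hs : Dense s) : densChar T ≤ #s :=
  csInf_le' (s := {c | ∃ s : Set T, Dense s ∧ #s = c}) ⟨s, hs, rfl⟩

lemma exists_dense_mk_eq_densChar (T : Type*) [TopologicalSpace T] :
    ∃ s : Set T, Dense s ∧ #s = densChar T :=
  csInf_mem (s := {c | ∃ s : Set T, Dense s ∧ #s = c}) ⟨_, Set.univ, dense_univ, rfl⟩

lemma densChar_eq_one [Subsingleton T] [Nonempty T] : densChar T = 1 := by
  obtain ⟨s, hs, hcard⟩ := exists_dense_mk_eq_densChar T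
  rw [← hcard, eq_one_iff_unique]
  exact ⟨inferInstance, hs.nonempty.to_subtype⟩

lemma aleph0_le_densChar [T1Space T] [Infinite T] : ℵ₀ ≤ densChar T := by
  obtain ⟨s, hs, hcard⟩ := exists_dense_mk_eq_densChar T
  rw [← hcard, aleph0_le_mk_iff, infinite_coe_iff]
  intro hfin
  have : s = Set.univ := by rw [← hs.closure_eq, hfin.isClosed.closure_eq]
  exact infinite_univ (this ▸ hfin)

lemma aleph0_le_densChar_of_ne_zero {E : Type*} [TopologicalSpace E] [T1Space E] [AddCommGroup E]
    [Module ℝ E] {x : E} (hx : x ≠ 0) : ℵ₀ ≤ densChar E :=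
  have : Infinite E := .of_injective _ (smul_left_injective ℝ hx)
  aleph0_le_densChar

end DensChar

theorem exists_superset_closed_under_mk_le {α : Type u} {ops : Set (α → α → α)}
    (hops : ops.Countable) (s : Set α) :
    ∃ t, s ⊆ t ∧ (∀ op ∈ ops, ∀ x ∈ t, ∀ y ∈ t, op x y ∈ t) ∧ #t ≤ max #s ℵ₀ := by
  set step : Set α → Set α := fun t => t ∪ ⋃ op ∈ ops, image2 op t t
  set c := max #s ℵ₀
  have hc : ℵ₀ ≤ c := le_max_right _ _
  have mk_step : ∀ t : Set α, #t ≤ c → #(step t) ≤ c := by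
    intro t ht
    have himage : ∀ op : ops, #(image2 op.1 t t) ≤ c := fun op =>
      mk_image2_le.trans ((mul_le_mul' ht ht).trans_eq (mul_eq_self hc))
    calc #(step t) ≤ #t + #ops * ⨆ op : ops, #(image2 op.1 t t) :=
          (mk_union_le _ _).trans (add_le_add_right (mk_biUnion_le _ _) _)
      _ ≤ c + ℵ₀ * c := by
          gcongr
          exacts [le_aleph0_iff_set_countable.2 hops, ciSup_le' himage]
      _ = c := by rw [aleph0_mul_eq hc, add_eq_self hc]
  have hmono : Monotone fun n => step^[n] s := monotone_nat_of_le_succ fun n => by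
    rw [Function.iterate_succ_apply']
    exact subset_union_left
  refine ⟨⋃ n, step^[n] s, subset_iUnion (fun n => step^[n] s) 0, ?_, ?_⟩
  · intro op hop x hx y hy
    obtain ⟨m, hm⟩ := mem_iUnion.1 hx
    obtain ⟨n, hn⟩ := mem_iUnion.1 hy
    refine mem_iUnion.2 ⟨max m n + 1, ?_⟩
    rw [Function.iterate_succ_apply']
    exact Or.inr (mem_biUnion hop
      (mem_image2_of_mem (hmono (le_max_left m n) hm) (hmono (le_max_right m n) hn)))
  · refine mk_subtype_le_of_countable_eventually_mem (f := fun n => step^[n] s) (l := atTop)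
      (fun x hx => ?_) fun n => ?_
    · obtain ⟨m, hm⟩ := mem_iUnion.1 hx
      exact eventually_atTop.2 ⟨m, fun n hn => hmono hn hm⟩
    · induction n with
      | zero => exact le_max_left _ _
      | succ n ih =>
        rw [Function.iterate_succ_apply']
        exact mk_step _ ih

theorem exists_superset_mk_le_closure_eq_submodule {E : Type u} [AddCommGroup E] [Module ℝ E]
    [TopologicalSpace E] [ContinuousAdd E] [ContinuousSMul ℝ E] {ops : Set (E → E → E)}
    (hops : ops.Countable) (s : Set E) :
    ∃ t, s ⊆ t ∧ (∀ op ∈ ops, ∀ x ∈ t, ∀ y ∈ t, op x y ∈ t) ∧ #t ≤ max #s ℵ₀ ∧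
      ∃ M : Submodule ℝ E, (M : Set E) = closure t := by
  obtain ⟨t, hst, ht, hcard⟩ := exists_superset_closed_under_mk_le
    (((countable_range fun (q : ℚ) (x _ : E) => (q : ℝ) • x).insert (· + ·)).union hops)
    (insert 0 s)
  have hadd : ∀ x ∈ t, ∀ y ∈ t, x + y ∈ t := ht _ (Or.inl (mem_insert _ _))
  have hsmul : ∀ q : ℚ, ∀ x ∈ t, (q : ℝ) • x ∈ t := fun q x hx =>
    ht _ (Or.inl (Or.inr ⟨q, rfl⟩)) x hx x hx
  have hinsert : #(insert 0 s : Set E) ≤ max #s ℵ₀ := calc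
    #(insert 0 s : Set E) ≤ max #s ℵ₀ + max #s ℵ₀ :=
      mk_insert_le.trans (add_le_add (le_max_left _ _) (one_le_aleph0.trans (le_max_right _ _)))
    _ = max #s ℵ₀ := add_eq_self (le_max_right _ _)
  refine ⟨t, (subset_insert _ _).trans hst, fun op hop => ht op (Or.inr hop),
    hcard.trans (max_le hinsert (le_max_right _ _)),
    { carrier := closure t
      zero_mem' := subset_closure (hst (mem_insert 0 s))
      add_mem' := fun hx hy => map_mem_closure₂ continuous_add hx hy hadd
      smul_mem' := fun c x hx => map_mem_closure₂ continuous_smul (Rat.denseRange_cast c) hx ?_ },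
    rfl⟩
  rintro _ ⟨q, rfl⟩ y hy
  exact hsmul q y hy

section ClosedSublattice

variable {E : Type*} [NormedAddCommGroup E] [Lattice E] [NormedSpace ℝ E] {S : Set E}

lemma IsClosedSublattice.convex (hS : IsClosedSublattice S) : Convex ℝ S :=
  fun x hx y hy a b _ _ _ => hS.2.2.1 _ (hS.2.2.2.1 a x hx) _ (hS.2.2.2.1 b y hy)

lemma IsClosedSublattice.sublatticeGen_subset (hS : IsClosedSublattice S) {A : Set E}
    (hA : A ⊆ S) : sublatticeGen A ⊆ S :=
  sInter_subset_of_mem ⟨hS, hA⟩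

end ClosedSublattice

theorem exists_superset_mk_le_isClosedSublattice_closure {X : Type u} [NormedAddCommGroup X]
    [Lattice X] [IsOrderedAddMonoid X] [HasSolidNorm X] [NormedSpace ℝ X] (s : Set X) :
    ∃ t, s ⊆ t ∧ #t ≤ max #s ℵ₀ ∧ IsClosedSublattice (closure t) := by
  obtain ⟨t, hst, ht, hcard, M, hM⟩ := exists_superset_mk_le_closure_eq_submodule
    (ops := {(· ⊔ ·), (· ⊓ ·)}) (toFinite _).countable s
  refine ⟨t, hst, hcard, isClosed_closure, ?_⟩
  rw [← hM]
  refine ⟨M.zero_mem, fun x hx y hy => M.add_mem hx hy, fun c x hx => M.smul_mem c hx, ?_⟩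
  rw [hM]
  constructor
  · exact fun x hx y hy => map_mem_closure₂ continuous_sup hx hy (ht _ (mem_insert _ _))
  · exact fun x hx y hy => map_mem_closure₂ continuous_inf hx hy (ht _ (mem_insert_of_mem _ rfl))

theorem exists_subset_mk_le_subset_closure_of_forall_isOpen {T β : Type u} [TopologicalSpace T]
    (B : β → Set T) (hB : ∀ x U, IsOpen U → x ∈ U → ∃ b, x ∈ B b ∧ B b ⊆ U) (S : Set T) :
    ∃ D ⊆ S, #D ≤ #β ∧ S ⊆ closure D := by
  let pt : {b // (S ∩ B b).Nonempty} → T := fun b => b.2.some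
  refine ⟨range pt, range_subset_iff.2 fun b => b.2.some_mem.1, mk_range_le.trans (mk_subtype_le _),
    fun x hx => mem_closure_iff.2 fun U hU hxU => ?_⟩
  obtain ⟨b, hxb, hbU⟩ := hB x U hU hxU
  let b' : {b // (S ∩ B b).Nonempty} := ⟨b, x, hx, hxb⟩
  exact ⟨pt b', hbU b'.2.some_mem.2, b', rfl⟩

theorem exists_subset_mk_le_subset_closure_pi {ι : Type u} (S : Set (ι → ℝ)) :
    ∃ D ⊆ S, #D ≤ max #ι ℵ₀ ∧ S ⊆ closure D := by
  let box (L : List (ι × ℚ × ℚ)) : Set (ι → ℝ) := {f | ∀ p ∈ L, f p.1 ∈ Ioo (p.2.1 : ℝ) p.2.2}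
  have hbox : ∀ f U, IsOpen U → f ∈ U → ∃ L, f ∈ box L ∧ box L ⊆ U := by
    intro f U hU hfU
    obtain ⟨I, u, hu, hIU⟩ := isOpen_pi_iff.1 hU f hfU
    have hrat : ∀ i ∈ I, ∃ q r : ℚ, f i ∈ Ioo (q : ℝ) r ∧ Ioo (q : ℝ) r ⊆ u i := by
      intro i hi
      obtain ⟨v, hv, hfv, hvu⟩ :=
        Real.isTopologicalBasis_Ioo_rat.exists_subset_of_mem_open (hu i hi).2 (hu i hi).1
      simp only [mem_iUnion, mem_singleton_iff] at hv
      obtain ⟨q, r, -, rfl⟩ := hv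
      exact ⟨q, r, hfv, hvu⟩
    choose! q r hfqr hqru using hrat
    refine ⟨I.toList.map fun i => (i, q i, r i), ?_, fun g hg => hIU fun i hi => hqru i hi ?_⟩
    · simpa [box] using hfqr
    · exact hg _ (List.mem_map.2 ⟨i, Finset.mem_toList.2 hi, rfl⟩)
  obtain ⟨D, hDS, hD, hSD⟩ := exists_subset_mk_le_subset_closure_of_forall_isOpen box hbox S
  refine ⟨D, hDS, hD.trans ?_, hSD⟩
  calc #(List (ι × ℚ × ℚ)) ≤ max ℵ₀ #(ι × ℚ × ℚ) := mk_list_le_max _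
    _ ≤ max #ι ℵ₀ := by
      refine max_le (le_max_right _ _) ?_
      simpa [mk_prod] using mul_le_max #ι ℵ₀

theorem IsCompact.exists_subset_mk_le_subset_closure {T ι : Type u} [TopologicalSpace T]
    {K : Set T} (hK : IsCompact K) (f : ι → T → ℝ) (hf : ∀ i, Continuous (f i))
    (hinj : K.InjOn fun x i => f i x) : ∃ D ⊆ K, #D ≤ max #ι ℵ₀ ∧ K ⊆ closure D := by
  set Φ : T → ι → ℝ := fun x i => f i x
  obtain ⟨D', hD'K, hD', hKD'⟩ := exists_subset_mk_le_subset_closure_pi (Φ '' K)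
  refine ⟨K ∩ Φ ⁻¹' D', inter_subset_left, ?_, fun x hx => mem_closure_iff.2 fun U hU hxU => ?_⟩
  · rw [← mk_image_eq_of_injOn Φ _ (hinj.mono inter_subset_left)]
    exact (mk_le_mk_of_subset (image_subset_iff.2 fun x hx => hx.2)).trans hD'
  · have hV : IsOpen (Φ '' (K \ U))ᶜ :=
      ((hK.diff hU).image (continuous_pi hf)).isClosed.isOpen_compl
    have hxV : Φ x ∈ (Φ '' (K \ U))ᶜ := fun ⟨y, hy, hyx⟩ => hy.2 (hinj hy.1 hx hyx ▸ hxU)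
    obtain ⟨_, hwV, hwD'⟩ := mem_closure_iff.1 (hKD' (mem_image_of_mem Φ hx)) _ hV hxV
    obtain ⟨d, hdK, rfl⟩ := hD'K hwD'
    exact ⟨d, not_not.1 fun hdU => hwV ⟨d, ⟨hdK, hdU⟩, rfl⟩, hdK, hwD'⟩

theorem exists_separating_weakDual_mk_le (X : Type u) [NormedAddCommGroup X] [NormedSpace ℝ X] :
    ∃ F : Set (WeakDual ℝ X), #F ≤ densChar X ∧ ∀ x : X, (∀ f ∈ F, f x = 0) → x = 0 := by
  obtain ⟨S, hS, hScard⟩ := exists_dense_mk_eq_densChar X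
  choose φ hφ1 hφs using fun s : X => exists_dual_vector'' ℝ s
  refine ⟨(fun s => StrongDual.toWeakDual (φ s)) '' S, hScard ▸ mk_image_le, fun x hx => ?_⟩
  by_contra hx0
  obtain ⟨s, hsx, hsS⟩ := Metric.dense_iff.1 hS x (‖x‖ / 2) (half_pos (norm_pos_iff.2 hx0))
  rw [Metric.mem_ball, dist_eq_norm] at hsx
  have hs : ‖s‖ ≤ ‖s - x‖ := calc
    ‖s‖ = φ s (s - x) := by simp [hφs, show φ s x = 0 from hx _ ⟨s, hsS, rfl⟩]
    _ ≤ ‖φ s‖ * ‖s - x‖ := (Real.le_norm_self _).trans ((φ s).le_opNorm _)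
    _ ≤ ‖s - x‖ := mul_le_of_le_one_left (norm_nonneg _) (hφ1 s)
  linarith [norm_le_norm_add_norm_sub' x s, norm_sub_rev x s]

theorem WeakDual.dense_span_of_forall_eq_zero {X : Type*} [TopologicalSpace X] [AddCommGroup X]
    [Module ℝ X] {F : Set (WeakDual ℝ X)} (hF : ∀ x : X, (∀ f ∈ F, f x = 0) → x = 0) :
    Dense (Submodule.span ℝ F : Set (WeakDual ℝ X)) := by
  have : LocallyConvexSpace ℝ (WeakDual ℝ X) := WeakBilin.locallyConvexSpace
  set N := Submodule.span ℝ F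
  set M := N.topologicalClosure
  rw [Submodule.dense_iff_topologicalClosure_eq_top, eq_top_iff]
  intro g _
  by_contra hg
  obtain ⟨ξ, u, hξg, hξM⟩ :=
    geometric_hahn_banach_point_closed M.convex N.isClosed_topologicalClosure hg
  -- every weak*-continuous functional is the evaluation at some `x : X`
  obtain ⟨x, rfl⟩ := LinearMap.dualEmbedding_surjective (topDualPairing ℝ X) ξ
  -- `ξ` is bounded below on the subspace `M`, so it vanishes on `F`
  have hx : x = 0 := hF x fun f hf => by
    by_contra hfx
    have h := hξM ((u / f x) • f)
      (M.smul_mem _ (N.le_topologicalClosure (Submodule.subset_span hf)))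
    change u < u / f x * f x at h
    rw [div_mul_cancel₀ u hfx] at h
    exact lt_irrefl u h
  have h0 := hξM 0 M.zero_mem
  change g x < u at hξg
  change u < 0 at h0
  rw [hx, map_zero] at hξg
  exact lt_irrefl (0 : ℝ) (hξg.trans h0)

theorem densChar_weakDual_le_max (X : Type u) [NormedAddCommGroup X] [NormedSpace ℝ X] :
    densChar (WeakDual ℝ X) ≤ max (densChar X) ℵ₀ := by
  obtain ⟨F, hFcard, hF⟩ := exists_separating_weakDual_mk_le X
  obtain ⟨t, hFt, -, htcard, M, hM⟩ :=
    exists_superset_mk_le_closure_eq_submodule (E := WeakDual ℝ X) countable_empty F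
  have ht : Dense t := by
    rw [← dense_closure, ← hM]
    exact (WeakDual.dense_span_of_forall_eq_zero hF).mono
      (Submodule.span_le.2 (hM ▸ hFt.trans subset_closure))
  exact (densChar_le_mk ht).trans (htcard.trans (max_le_max_right _ hFcard))

theorem WeakDual.eq_of_forall_mem_dense {X : Type*} [TopologicalSpace X] [AddCommGroup X]
    [Module ℝ X] [SeparatingDual ℝ X] {D : Set (WeakDual ℝ X)} (hD : Dense D) {x y : X}
    (h : ∀ f ∈ D, f x = f y) : x = y :=
  SeparatingDual.eq_iff_forall_dual_eq.2 fun g =>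
    congrFun (Continuous.ext_on hD (WeakDual.eval_continuous x) (WeakDual.eval_continuous y) h)
      (StrongDual.toWeakDual g)

theorem subset_closure_of_image_toWeakSpace_subset {E : Type*} [NormedAddCommGroup E]
    [NormedSpace ℝ E] {K C : Set E} (hC : Convex ℝ C)
    (h : toWeakSpace ℝ E '' K ⊆ closure (toWeakSpace ℝ E '' C)) : K ⊆ closure C := by
  rwa [← hC.toWeakSpace_closure (𝕜 := ℝ), image_subset_image_iff (toWeakSpace ℝ E).injective] at h

theorem densChar_le_max_densChar_weakDual {X : Type u} [NormedAddCommGroup X] [Lattice X]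
    [IsOrderedAddMonoid X] [HasSolidNorm X] [NormedSpace ℝ X] {K : Set X} (hK : WeaklyCompact K)
    (hKgen : sublatticeGen K = Set.univ) : densChar X ≤ max (densChar (WeakDual ℝ X)) ℵ₀ := by
  obtain ⟨Dw, hDw, hDwcard⟩ := exists_dense_mk_eq_densChar (WeakDual ℝ X)
  obtain ⟨D, hDK, hDcard, hKD⟩ := IsCompact.exists_subset_mk_le_subset_closure hK
    (fun (f : Dw) (y : WeakSpace ℝ X) => (f : WeakDual ℝ X) ((toWeakSpace ℝ X).symm y))
    (fun f => WeakBilin.eval_continuous _ _)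
    (fun y₁ _ y₂ _ h => (toWeakSpace ℝ X).symm.injective
      (WeakDual.eq_of_forall_mem_dense hDw fun f hf => congrFun h ⟨f, hf⟩))
  obtain ⟨Q, hDQ, hQcard, hQ⟩ :=
    exists_superset_mk_le_isClosedSublattice_closure ((toWeakSpace ℝ X).symm '' D)
  have hKQ : K ⊆ closure Q := by
    simpa using subset_closure_of_image_toWeakSpace_subset hQ.convex (hKD.trans (closure_mono
      fun d hd => ⟨_, subset_closure (hDQ ⟨d, hd, rfl⟩), LinearEquiv.apply_symm_apply _ _⟩))
  have hQdense : Dense Q := by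
    rw [dense_iff_closure_eq, ← univ_subset_iff, ← hKgen]
    exact hQ.sublatticeGen_subset hKQ
  calc densChar X ≤ #Q := densChar_le_mk hQdense
    _ ≤ max #((toWeakSpace ℝ X).symm '' D) ℵ₀ := hQcard
    _ ≤ max (max #Dw ℵ₀) ℵ₀ := max_le_max_right _ (mk_image_le.trans hDcard)
    _ = max (densChar (WeakDual ℝ X)) ℵ₀ := by rw [hDwcard, max_assoc, max_self]

theorem densChar_eq_of_LWCG_general
    {X : Type*} [NormedAddCommGroup X] [Lattice X] [IsOrderedAddMonoid X] [HasSolidNorm X]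
    [NormedSpace ℝ X]
    (h : ∃ K : Set X, WeaklyCompact K ∧ sublatticeGen K = Set.univ) :
    densChar X = densChar (WeakDual ℝ X) := by
  obtain ⟨K, hK, hKgen⟩ := h
  rcases subsingleton_or_nontrivial X with hX | hX
  · have : Subsingleton (WeakDual ℝ X) :=
      ⟨fun f g => DFunLike.ext f g fun x => by rw [Subsingleton.elim x 0, map_zero, map_zero]⟩
    rw [densChar_eq_one, densChar_eq_one]
  · obtain ⟨x, hx⟩ := exists_ne (0 : X)
    obtain ⟨f, -, hfx⟩ := exists_dual_vector ℝ x (norm_ne_zero_iff.2 hx)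
    have hXinf : ℵ₀ ≤ densChar X := aleph0_le_densChar_of_ne_zero hx
    have hWinf : ℵ₀ ≤ densChar (WeakDual ℝ X) :=
      aleph0_le_densChar_of_ne_zero (x := StrongDual.toWeakDual f) fun hf => hx <| by
        simpa [show f = 0 from hf] using hfx.symm
    apply le_antisymm
    · simpa [hWinf] using densChar_le_max_densChar_weakDual hK hKgen
    · simpa [hXinf] using densChar_weakDual_le_max X

/-- if X is LWCG then dens(X) = dens(X*, w*). -/
theorem densChar_eq_of_LWCG
    {X : Type*} [NormedAddCommGroup X] [Lattice X] [IsOrderedAddMonoid X] [HasSolidNorm X]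
    [NormedSpace ℝ X] [CompleteSpace X]
    (h : ∃ K : Set X, WeaklyCompact K ∧ sublatticeGen K = Set.univ) :
    densChar X = densChar (WeakDual ℝ X) :=
  densChar_eq_of_LWCG_general h
end

section
/- For 1 < p < ∞, the weak-Lp space L_{p,∞}[0,1] has no quasi-interior point. -/
open Filter Topology Set MeasureTheory ENNReal

/-- The weak-Lp quasinorm of a function on [0,1]:
‖f‖_{p,∞} = sup_{t>0} t · λ({|f| > t})^{1/p}, valued in ℝ≥0∞. -/
noncomputable def wLpNorm (p : ℝ) (f : ℝ → ℝ) : ℝ≥0∞ :=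
  ⨆ t : {t : ℝ // 0 < t},
    ENNReal.ofReal t.1 *
      ((volume.restrict (Set.Icc (0 : ℝ) 1)) {x | t.1 < |f x|}) ^ (1 / p)

/-!
Only the finiteness of `u` matters: some sublevel set `S = {u ≤ N}` has positive measure. The
extremal function `x ↦ x^(-1/p)` of `L_{p,∞}` can be transplanted onto `S` through the
distribution function `F` of `λ|_S`, which carries `λ|_S` to Lebesgue measure on `[0, λ S]`;
the resulting `f = F^(-1/p)` on `S` has `‖f‖_{p,∞} ≤ 1`. As `n u ≤ n N` on `S`, `f - f ∧ n u`
still exceeds `l / 2` wherever `f ≥ l` for any `l > 2 n N`, a set of measure comparable to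
`l^(-p)`; so its weak norm is bounded below by a constant independent of `n`.
-/

noncomputable def distribFun (ν : Measure ℝ) (x : ℝ) : ℝ := (ν (Iic x)).toReal

lemma distribFun_nonneg (ν : Measure ℝ) (x : ℝ) : 0 ≤ distribFun ν x := toReal_nonneg

section DistribFun

variable {ν : Measure ℝ} [IsFiniteMeasure ν]

lemma monotone_distribFun : Monotone (distribFun ν) := fun _ _ h =>
  toReal_mono (measure_ne_top _ _) (measure_mono (Iic_subset_Iic.2 h))

lemma distribFun_add_measure_Ioc {x y : ℝ} (h : x ≤ y) :
    distribFun ν x + (ν (Ioc x y)).toReal = distribFun ν y := by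
  rw [distribFun, distribFun, ← Iic_union_Ioc_eq_Iic h,
    measure_union (Iic_disjoint_Ioc le_rfl) measurableSet_Ioc,
    toReal_add (measure_ne_top _ _) (measure_ne_top _ _)]

lemma lipschitzWith_distribFun (hν : ν ≤ volume) : LipschitzWith 1 (distribFun ν) := by
  refine LipschitzWith.of_le_add fun x y => ?_
  rcases le_total x y with hxy | hyx
  · exact (monotone_distribFun hxy).trans (le_add_of_nonneg_right dist_nonneg)
  · rw [← distribFun_add_measure_Ioc hyx, Real.dist_eq, abs_of_nonneg (sub_nonneg.2 hyx)]
    gcongr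
    calc (ν (Ioc y x)).toReal ≤ (volume (Ioc y x)).toReal :=
          toReal_mono measure_Ioc_lt_top.ne (hν _)
      _ = x - y := by rw [Real.volume_Ioc, toReal_ofReal (sub_nonneg.2 hyx)]

lemma tendsto_distribFun_atBot : Tendsto (distribFun ν) atBot (𝓝 0) := by
  have h := tendsto_measure_iInter_atBot (μ := ν) (fun _ => measurableSet_Iic.nullMeasurableSet)
    (monotone_Iic (α := ℝ)) ⟨0, measure_ne_top _ _⟩
  have hempty : ⋂ x : ℝ, Iic x = ∅ :=
    eq_empty_of_forall_notMem fun x hx => by linarith [mem_Iic.1 (mem_iInter.1 hx (x - 1))]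
  rw [hempty, measure_empty] at h
  exact (tendsto_toReal zero_ne_top).comp h

lemma tendsto_distribFun_atTop : Tendsto (distribFun ν) atTop (𝓝 (ν univ).toReal) :=
  (tendsto_toReal (measure_ne_top _ _)).comp (tendsto_measure_Iic_atTop ν)

lemma Ioo_subset_range_distribFun (hν : ν ≤ volume) :
    Ioo 0 (ν univ).toReal ⊆ range (distribFun ν) := by
  rintro s ⟨hs₀, hs⟩
  obtain ⟨a, ha⟩ :=
    ((tendsto_distribFun_atBot (ν := ν)).eventually (gt_mem_nhds hs₀)).exists
  obtain ⟨b, hb⟩ := ((tendsto_distribFun_atTop (ν := ν)).eventually (lt_mem_nhds hs)).exists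
  exact intermediate_value_univ a b (lipschitzWith_distribFun hν).continuous ⟨ha.le, hb.le⟩

lemma measure_distribFun_lt_le (hν : ν ≤ volume) (s : ℝ) :
    ν {x | distribFun ν x < s} ≤ ENNReal.ofReal s := by
  rcases le_or_gt s 0 with hs₀ | hs₀
  · have : {x | distribFun ν x < s} = ∅ :=
      eq_empty_of_forall_notMem fun x hx => (hx.trans_le hs₀).not_ge (distribFun_nonneg ν x)
    rw [this, measure_empty]
    exact zero_le
  rcases lt_or_ge s (ν univ).toReal with hs | hs
  · obtain ⟨y, rfl⟩ := Ioo_subset_range_distribFun hν ⟨hs₀, hs⟩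
    calc ν {x | distribFun ν x < distribFun ν y} ≤ ν (Iic y) :=
          measure_mono fun x hx => (monotone_distribFun.reflect_lt hx).le
      _ = ENNReal.ofReal (distribFun ν y) := (ofReal_toReal (measure_ne_top _ _)).symm
  · calc ν {x | distribFun ν x < s} ≤ ν univ := measure_mono (subset_univ _)
      _ ≤ ENNReal.ofReal s := by
          rw [← ofReal_toReal (measure_ne_top ν univ)]
          exact ofReal_le_ofReal hs

lemma ofReal_sub_le_measure_distribFun_mem_Icc (hν : ν ≤ volume) {a b : ℝ} (ha : 0 < a)
    (hab : a < b) (hb : b < (ν univ).toReal) :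
    ENNReal.ofReal (b - a) ≤ ν {x | distribFun ν x ∈ Icc a b} := by
  obtain ⟨x, rfl⟩ := Ioo_subset_range_distribFun hν ⟨ha, hab.trans hb⟩
  obtain ⟨y, rfl⟩ := Ioo_subset_range_distribFun hν ⟨ha.trans hab, hb⟩
  have hxy := (monotone_distribFun.reflect_lt hab).le
  calc ENNReal.ofReal (distribFun ν y - distribFun ν x) = ν (Ioc x y) := by
        rw [← distribFun_add_measure_Ioc hxy, add_sub_cancel_left,
          ofReal_toReal (measure_ne_top _ _)]
    _ ≤ ν {z | distribFun ν z ∈ Icc (distribFun ν x) (distribFun ν y)} :=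
        measure_mono fun z hz => ⟨monotone_distribFun hz.1.le, monotone_distribFun hz.2⟩

end DistribFun

local notation "μ" => Measure.restrict volume (Icc (0 : ℝ) 1)

lemma le_wLpNorm (p : ℝ) (f : ℝ → ℝ) {t : ℝ} (ht : 0 < t) :
    ENNReal.ofReal t * μ {x | t < |f x|} ^ (1 / p) ≤ wLpNorm p f :=
  le_iSup (fun s : {t : ℝ // 0 < t} =>
    ENNReal.ofReal s.1 * μ {x | s.1 < |f x|} ^ (1 / p)) ⟨t, ht⟩

lemma Real.rpow_neg_rpow_one_div {t p : ℝ} (ht : 0 ≤ t) (hp : p ≠ 0) :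
    (t ^ (-p)) ^ (1 / p) = t⁻¹ := by
  rw [Real.rpow_neg ht, Real.inv_rpow (Real.rpow_nonneg ht _), one_div, Real.rpow_rpow_inv ht hp]

/-- Where the distribution function vanishes, `Real.rpow` gives `0` rather than `∞`. -/
noncomputable def weakLpProfile (p : ℝ) (S : Set ℝ) : ℝ → ℝ :=
  S.indicator fun x => distribFun ((μ).restrict S) x ^ (-p)⁻¹

section WeakLpProfile

variable {p : ℝ} {S : Set ℝ}

lemma measurable_weakLpProfile (hS : MeasurableSet S) : Measurable (weakLpProfile p S) :=
  (monotone_distribFun.measurable.pow_const _).indicator hS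

lemma weakLpProfile_nonneg : 0 ≤ weakLpProfile p S :=
  indicator_nonneg fun x _ => Real.rpow_nonneg (distribFun_nonneg _ x) _

lemma volume_restrict_restrict_le : (μ).restrict S ≤ volume :=
  Measure.restrict_le_self.trans Measure.restrict_le_self

lemma lt_weakLpProfile_iff (hp : 0 < p) {t x : ℝ} (ht : 0 < t) :
    t < weakLpProfile p S x ↔
      x ∈ S ∧ 0 < distribFun ((μ).restrict S) x ∧
        distribFun ((μ).restrict S) x < t ^ (-p) := by
  by_cases hx : x ∈ S
  · rw [weakLpProfile, indicator_of_mem hx]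
    rcases (distribFun_nonneg _ x).eq_or_lt with hF | hF
    · rw [← hF, Real.zero_rpow (inv_ne_zero (neg_ne_zero.2 hp.ne'))]
      simp [ht.not_gt]
    · rw [Real.lt_rpow_inv_iff_of_neg ht hF (neg_neg_of_pos hp)]
      simp [hx, hF]
  · simp [weakLpProfile, hx, ht.not_gt]

lemma le_weakLpProfile (hp : 0 < p) {l x : ℝ} (hl : 0 < l) (hx : x ∈ S)
    (hF₀ : 0 < distribFun ((μ).restrict S) x)
    (hF : distribFun ((μ).restrict S) x ≤ l ^ (-p)) :
    l ≤ weakLpProfile p S x := by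
  rwa [weakLpProfile, indicator_of_mem hx, Real.le_rpow_inv_iff_of_neg hl hF₀ (neg_neg_of_pos hp)]

lemma wLpNorm_weakLpProfile_le_one (hp : 0 < p) (hS : MeasurableSet S) :
    wLpNorm p (weakLpProfile p S) ≤ 1 := by
  refine iSup_le fun ⟨t, ht⟩ => ?_
  have hlevel : μ {x | t < |weakLpProfile p S x|} ≤ ENNReal.ofReal (t ^ (-p)) :=
    calc μ {x | t < |weakLpProfile p S x|}
        ≤ μ ({x | distribFun ((μ).restrict S) x < t ^ (-p)} ∩ S) := by
          refine measure_mono fun x hx => ?_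
          obtain ⟨hxS, -, hlt⟩ := (lt_weakLpProfile_iff hp ht).1
            (lt_of_lt_of_eq hx (abs_of_nonneg (weakLpProfile_nonneg x)))
          exact ⟨hlt, hxS⟩
      _ = (μ).restrict S {x | distribFun ((μ).restrict S) x < t ^ (-p)} :=
          (Measure.restrict_apply' hS).symm
      _ ≤ ENNReal.ofReal (t ^ (-p)) := measure_distribFun_lt_le volume_restrict_restrict_le _
  calc ENNReal.ofReal t * μ {x | t < |weakLpProfile p S x|} ^ (1 / p)
      ≤ ENNReal.ofReal t * ENNReal.ofReal (t ^ (-p)) ^ (1 / p) := by gcongr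
    _ = 1 := by
      rw [ofReal_rpow_of_nonneg (Real.rpow_nonneg ht.le _) (by positivity), ← ofReal_mul ht.le,
        Real.rpow_neg_rpow_one_div ht.le hp.ne', mul_inv_cancel₀ ht.ne', ofReal_one]

lemma ofReal_le_wLpNorm_weakLpProfile_sub_min (hp : 0 < p) (hS : MeasurableSet S)
    (hS₀ : μ S ≠ 0) {T : ℝ} {v : ℝ → ℝ} (hv : ∀ x ∈ S, v x ≤ T) :
    ENNReal.ofReal (2⁻¹ * 2⁻¹ ^ (1 / p)) ≤
      wLpNorm p fun x => weakLpProfile p S x - min (weakLpProfile p S x) (v x) := by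
  set f := weakLpProfile p S
  have hmass : 0 < ((μ).restrict S univ).toReal := by
    rw [Measure.restrict_apply_univ]
    exact toReal_pos hS₀ (measure_ne_top _ _)
  obtain ⟨l, hlS, hlT, hl₀⟩ :
      ∃ l : ℝ, l ^ (-p) < ((μ).restrict S univ).toReal ∧ 2 * T < l ∧ 0 < l :=
    (((tendsto_rpow_neg_atTop hp).eventually (gt_mem_nhds hmass)).and
      ((eventually_gt_atTop _).and (eventually_gt_atTop 0))).exists
  have hr₀ : 0 < l ^ (-p) := Real.rpow_pos_of_pos hl₀ _
  have hsub : {x | distribFun ((μ).restrict S) x ∈ Icc (l ^ (-p) / 2) (l ^ (-p))} ∩ S ⊆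
      {x | l / 2 < |f x - min (f x) (v x)|} := by
    rintro x ⟨⟨hlo, hhi⟩, hxS⟩
    have hfx : l ≤ f x := le_weakLpProfile hp hl₀ hxS ((half_pos hr₀).trans_le hlo) hhi
    change l / 2 < |f x - min (f x) (v x)|
    rw [abs_of_nonneg (sub_nonneg.2 (min_le_left _ _))]
    linarith [min_le_right (f x) (v x), hv x hxS]
  calc ENNReal.ofReal (2⁻¹ * 2⁻¹ ^ (1 / p))
      = ENNReal.ofReal (l / 2) * ENNReal.ofReal (l ^ (-p) - l ^ (-p) / 2) ^ (1 / p) := by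
        rw [ofReal_rpow_of_nonneg (by linarith) (by positivity), ← ofReal_mul (by positivity),
          show l ^ (-p) - l ^ (-p) / 2 = l ^ (-p) * 2⁻¹ by ring,
          Real.mul_rpow hr₀.le (by norm_num),
          Real.rpow_neg_rpow_one_div hl₀.le hp.ne']
        field_simp
    _ ≤ ENNReal.ofReal (l / 2) * μ {x | l / 2 < |f x - min (f x) (v x)|} ^ (1 / p) := by
        gcongr
        calc ENNReal.ofReal (l ^ (-p) - l ^ (-p) / 2)
            ≤ (μ).restrict S
                {x | distribFun ((μ).restrict S) x ∈ Icc (l ^ (-p) / 2) (l ^ (-p))} :=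
              ofReal_sub_le_measure_distribFun_mem_Icc volume_restrict_restrict_le
                (half_pos hr₀) (half_lt_self hr₀) hlS
          _ ≤ μ {x | l / 2 < |f x - min (f x) (v x)|} := by
              rw [Measure.restrict_apply' hS]
              exact measure_mono hsub
    _ ≤ wLpNorm p fun x => f x - min (f x) (v x) := le_wLpNorm p _ (by positivity)

end WeakLpProfile

/-- for 1 < p < ∞, the space L_{p,∞}[0,1] has no quasi-interior point,
i.e. there is no 0 ≤ u in L_{p,∞} such that ‖f − f ∧ n·u‖_{p,∞} → 0 for every
0 ≤ f in L_{p,∞}. -/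
theorem weakLp_no_quasiInterior_point (p : ℝ) (hp : 1 < p) :
    ¬ ∃ u : ℝ → ℝ, Measurable u ∧ 0 ≤ u ∧ wLpNorm p u < ⊤ ∧
      ∀ f : ℝ → ℝ, Measurable f → 0 ≤ f → wLpNorm p f < ⊤ →
        Tendsto (fun n : ℕ => wLpNorm p (fun x => f x - min (f x) ((n : ℝ) * u x)))
          atTop (𝓝 0) := by
  rintro ⟨u, hu, -, -, hqi⟩
  have hp₀ : 0 < p := zero_lt_one.trans hp
  obtain ⟨N, hN⟩ : ∃ N : ℕ, 0 < μ {x | u x ≤ N} := by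
    have hcover : ⋃ n : ℕ, {x | u x ≤ n} = univ :=
      iUnion_eq_univ_iff.2 fun x => exists_nat_ge (u x)
    refine exists_measure_pos_of_not_measure_iUnion_null ?_
    rw [hcover, Measure.restrict_apply_univ, Real.volume_Icc]
    norm_num
  have hS : MeasurableSet {x | u x ≤ N} := measurableSet_le hu measurable_const
  have hlim := hqi _ (measurable_weakLpProfile hS) weakLpProfile_nonneg
    ((wLpNorm_weakLpProfile_le_one hp₀ hS).trans_lt one_lt_top)
  have hfar := fun n : ℕ => ofReal_le_wLpNorm_weakLpProfile_sub_min hp₀ hS hN.ne'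
    fun x (hx : u x ≤ N) => mul_le_mul_of_nonneg_left hx n.cast_nonneg
  exact (ofReal_pos.2 (by positivity)).not_ge (ge_of_tendsto' hlim hfar)
end

section
/- If X is a weakly precompactly generated Banach space, then X contains no subspace isomorphic to ℓ∞. -/
open Filter Topology Set

/-! If `e : ℓ^∞ → X` is bounded below by `c`, the images `ξ x = e 𝟙_{S x}` of an uncountable
independent family `(S x)_{x ∈ ℝ}` of subsets of `ℕ` are each `c/4`-close to one of the countably
many weakly precompact sets of combinations of `n` elements of `K` with coefficients bounded by
`Λ`. One of these sets is close to `ξ x` for infinitely many `x`, which produces a weakly Cauchy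
sequence `Y m` close to `ξ (x m)` with the `x m` distinct. By independence some ultrafilter on
`ℕ` contains `S (x m)` for even `m` and its complement for odd `m`; the limit of the coordinates
along it, extended by Hahn–Banach to `X` with norm `≤ 1/c`, is alternately `1` and `0` on the
`ξ (x m)`, hence cannot converge along `Y`. -/

open scoped lp ENNReal Pointwise

section WeaklyPrecompact

variable {X : Type*} [NormedAddCommGroup X] [NormedSpace ℝ X]

def WeaklyCauchySeq (u : ℕ → X) : Prop :=
  ∀ f : StrongDual ℝ X, ∃ l, Tendsto (fun n => f (u n)) atTop (𝓝 l)

theorem WeaklyCauchySeq.comp {u : ℕ → X} (hu : WeaklyCauchySeq u) {φ : ℕ → ℕ}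
    (hφ : StrictMono φ) : WeaklyCauchySeq (u ∘ φ) := fun f =>
  (hu f).imp fun _ hl => hl.comp hφ.tendsto_atTop

theorem WeaklyPrecompact.exists_weaklyCauchySeq {K : Set X} (hK : WeaklyPrecompact K)
    {u : ℕ → X} (hu : ∀ n, u n ∈ K) : ∃ φ : ℕ → ℕ, StrictMono φ ∧ WeaklyCauchySeq (u ∘ φ) :=
  hK u hu

theorem WeaklyPrecompact.mono {A B : Set X} (hB : WeaklyPrecompact B) (hAB : A ⊆ B) :
    WeaklyPrecompact A := fun u hu => hB u fun n => hAB (hu n)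

theorem weaklyPrecompact_singleton (x : X) : WeaklyPrecompact {x} := fun _ hu =>
  ⟨id, strictMono_id, fun f => ⟨f x, by simp [mem_singleton_iff.1 (hu _)]⟩⟩

theorem WeaklyPrecompact.add {A B : Set X} (hA : WeaklyPrecompact A) (hB : WeaklyPrecompact B) :
    WeaklyPrecompact (A + B) := by
  intro u hu
  choose a ha b hb hab using hu
  obtain ⟨φ, hφ, haφ⟩ := hA.exists_weaklyCauchySeq ha
  obtain ⟨ψ, hψ, hbψ⟩ := hB.exists_weaklyCauchySeq fun n => hb (φ n)
  refine ⟨φ ∘ ψ, hφ.comp hψ, fun f => ?_⟩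
  obtain ⟨l, hl⟩ := haφ.comp hψ f
  obtain ⟨m, hm⟩ := hbψ f
  exact ⟨l + m, by simpa [← hab] using hl.add hm⟩

theorem WeaklyPrecompact.smul {S : Set ℝ} (hS : Bornology.IsBounded S) {K : Set X}
    (hK : WeaklyPrecompact K) : WeaklyPrecompact (S • K) := by
  intro u hu
  choose a ha k hk hak using hu
  obtain ⟨t, -, φ, hφ, ht⟩ := tendsto_subseq_of_bounded hS ha
  obtain ⟨ψ, hψ, hkψ⟩ := hK.exists_weaklyCauchySeq fun n => hk (φ n)
  refine ⟨φ ∘ ψ, hφ.comp hψ, fun f => ?_⟩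
  obtain ⟨l, hl⟩ := hkψ f
  exact ⟨t * l, by simpa [← hak] using (ht.comp hψ.tendsto_atTop).mul hl⟩

def boundedCombinations (K : Set X) (n : ℕ) (Λ : ℝ) : Set X :=
  {x | ∃ (a : Fin n → ℝ) (k : Fin n → X), (∀ i, |a i| ≤ Λ) ∧ (∀ i, k i ∈ K) ∧
    ∑ i, a i • k i = x}

theorem boundedCombinations_succ_subset (K : Set X) (n : ℕ) (Λ : ℝ) :
    boundedCombinations K (n + 1) Λ ⊆ Icc (-Λ) Λ • K + boundedCombinations K n Λ := by
  rintro _ ⟨a, k, ha, hk, rfl⟩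
  rw [Fin.sum_univ_succ]
  exact add_mem_add (smul_mem_smul (abs_le.1 (ha 0)) (hk 0))
    ⟨_, _, fun i => ha i.succ, fun i => hk i.succ, rfl⟩

theorem weaklyPrecompact_boundedCombinations {K : Set X} (hK : WeaklyPrecompact K) (n : ℕ)
    (Λ : ℝ) : WeaklyPrecompact (boundedCombinations K n Λ) := by
  induction n with
  | zero => exact (weaklyPrecompact_singleton 0).mono fun _ ⟨_, _, _, _, hx⟩ => by simp [← hx]
  | succ n ih =>
    exact ((hK.smul (Metric.isBounded_Icc _ _)).add ih).mono
      (boundedCombinations_succ_subset K n Λ)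

theorem span_subset_iUnion_boundedCombinations (K : Set X) :
    (Submodule.span ℝ K : Set X) ⊆ ⋃ p : ℕ × ℕ, boundedCombinations K p.1 p.2 := by
  intro x hx
  obtain ⟨n, a, k, rfl⟩ := Submodule.mem_span_set'.1 hx
  refine mem_iUnion.2 ⟨(n, ⌈∑ i, |a i|⌉₊), a, _, fun i => ?_, fun i => (k i).2, rfl⟩
  exact (Finset.single_le_sum (fun j _ => abs_nonneg (a j)) (Finset.mem_univ i)).trans
    (Nat.le_ceil _)

theorem WeaklyPrecompact.exists_weaklyCauchySeq_near {α : Type*} [Uncountable α] {K : Set X}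
    (hK : WeaklyPrecompact K) (hdense : closure (Submodule.span ℝ K : Set X) = univ)
    (ξ : α → X) {ε : ℝ} (hε : 0 < ε) :
    ∃ r : ℕ → α, Function.Injective r ∧
      ∃ Y : ℕ → X, WeaklyCauchySeq Y ∧ ∀ m, dist (ξ (r m)) (Y m) < ε := by
  let T : ℕ × ℕ → Set α := fun p =>
    {x | ∃ y ∈ boundedCombinations K p.1 p.2, dist (ξ x) y < ε}
  have hT : ⋃ p, T p = univ := eq_univ_of_forall fun x => by
    obtain ⟨y, hy, hxy⟩ := Metric.mem_closure_iff.1 (hdense ▸ mem_univ (ξ x)) ε hε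
    obtain ⟨p, hp⟩ := mem_iUnion.1 (span_subset_iUnion_boundedCombinations K hy)
    exact mem_iUnion.2 ⟨p, y, hp, hxy⟩
  obtain ⟨p, hp⟩ : ∃ p, (T p).Infinite := by
    by_contra! h
    exact not_countable_univ (hT ▸ countable_iUnion fun p => (h p).countable)
  choose Y₀ hY₀ hY₀ξ using fun m => (hp.natEmbedding _ m).2
  obtain ⟨φ, hφ, hY⟩ :=
    (weaklyPrecompact_boundedCombinations hK p.1 p.2).exists_weaklyCauchySeq hY₀
  exact ⟨fun m => hp.natEmbedding _ (φ m),
    (Subtype.val_injective.comp (hp.natEmbedding _).injective).comp hφ.injective,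
    Y₀ ∘ φ, hY, fun m => hY₀ξ (φ m)⟩

end WeaklyPrecompact

section Dual

variable {E X : Type*} [NormedAddCommGroup E] [NormedSpace ℝ E]
  [NormedAddCommGroup X] [NormedSpace ℝ X]

theorem exists_tendsto_ultrafilter_of_norm_le {ι : Type*} (V : Ultrafilter ι)
    (g : ι → StrongDual ℝ E) {C : ℝ} (hg : ∀ i, ‖g i‖ ≤ C) :
    ∃ φ : StrongDual ℝ E, ‖φ‖ ≤ C ∧ ∀ x, Tendsto (fun i => g i x) V (𝓝 (φ x)) := by
  let G : ι → WeakDual ℝ E := fun i => StrongDual.toWeakDual (g i)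
  have hG : ∀ i, G i ∈ WeakDual.toStrongDual ⁻¹' Metric.closedBall 0 C := fun i => by
    simpa [G] using hg i
  obtain ⟨φ, hφC, hφ⟩ := (WeakDual.isCompact_closedBall 0 C).ultrafilter_le_nhds (V.map G)
    (le_principal_iff.2 (Ultrafilter.mem_map.2 (univ_mem' hG)))
  refine ⟨WeakDual.toStrongDual φ, by simpa using hφC, fun x => ?_⟩
  exact ((WeakDual.eval_continuous x).tendsto φ).comp hφ

theorem exists_extension_of_mul_norm_le_norm_apply (e : E →L[ℝ] X) {c : ℝ} (hc : 0 < c)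
    (he : ∀ v, c * ‖v‖ ≤ ‖e v‖) (φ : StrongDual ℝ E) :
    ∃ h : StrongDual ℝ X, (∀ v, h (e v) = φ v) ∧ ‖h‖ ≤ ‖φ‖ / c := by
  have hinj : Function.Injective (e : E →ₗ[ℝ] X) := by
    refine (injective_iff_map_eq_zero _).2 fun v hv => norm_le_zero_iff.1 ?_
    have := he v
    simp only [ContinuousLinearMap.coe_coe] at hv
    rw [hv, norm_zero] at this
    exact nonpos_of_mul_nonpos_right this hc
  let ψ : LinearMap.range (e : E →ₗ[ℝ] X) →ₗ[ℝ] ℝ :=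
    φ.toLinearMap ∘ₗ (LinearEquiv.ofInjective _ hinj).symm.toLinearMap
  have hψ : ∀ v, ψ (LinearEquiv.ofInjective _ hinj v) = φ v := fun v => by simp [ψ]
  have hψ_le : ∀ z, ‖ψ z‖ ≤ ‖φ‖ / c * ‖z‖ := by
    intro z
    obtain ⟨v, rfl⟩ := (LinearEquiv.ofInjective _ hinj).surjective z
    rw [hψ, div_mul_eq_mul_div, le_div_iff₀ hc]
    calc ‖φ v‖ * c ≤ ‖φ‖ * ‖v‖ * c := by gcongr; exact φ.le_opNorm v
      _ = ‖φ‖ * (c * ‖v‖) := by ring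
      _ ≤ ‖φ‖ * ‖e v‖ := by gcongr; exact he v
  obtain ⟨h, hhψ, hh⟩ := exists_extension_norm_eq _ (ψ.mkContinuous _ hψ_le)
  refine ⟨h, fun v => ?_, hh ▸ LinearMap.mkContinuous_norm_le _ (by positivity) _⟩
  simpa [hψ] using hhψ (LinearEquiv.ofInjective _ hinj v)

end Dual

section IndependentFamily

noncomputable def ratCut (F : Finset ℚ) (x : ℝ) : Finset ℚ := F.filter fun q => (q : ℝ) ≤ x

/-- An independent family of subsets of `ℕ` indexed by `ℝ` (Fichtenholz–Kantorovich): `n` codes a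
pair `(F, 𝒜)` and lies in `cutSet x` when the cut of `F` at `x` belongs to `𝒜`. -/
noncomputable def cutSet (x : ℝ) : Set ℕ :=
  Encodable.encode '' {b : Finset ℚ × Finset (Finset ℚ) | ratCut b.1 x ∈ b.2}

theorem exists_finset_rat_separating (s : Finset ℝ) :
    ∃ F : Finset ℚ, ∀ x ∈ s, ∀ y ∈ s, x < y → ∃ q ∈ F, x < q ∧ (q : ℝ) ≤ y := by
  have : ∀ p : ℝ × ℝ, ∃ q : ℚ, p.1 < p.2 → p.1 < q ∧ (q : ℝ) ≤ p.2 := fun p => by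
    by_cases h : p.1 < p.2
    · obtain ⟨q, hq₁, hq₂⟩ := exists_rat_btwn h
      exact ⟨q, fun _ => ⟨hq₁, hq₂.le⟩⟩
    · exact ⟨0, fun h' => absurd h' h⟩
  choose sep hsep using this
  exact ⟨(s ×ˢ s).image sep, fun x hx y hy hxy =>
    ⟨sep (x, y), Finset.mem_image_of_mem _ (Finset.mem_product.2 ⟨hx, hy⟩), hsep (x, y) hxy⟩⟩

theorem exists_forall_mem_cutSet_iff (s : Finset ℝ) (P : ℝ → Prop) :
    ∃ n, ∀ x ∈ s, n ∈ cutSet x ↔ P x := by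
  classical
  obtain ⟨F, hF⟩ := exists_finset_rat_separating s
  have hcut : InjOn (ratCut F) s := by
    intro x hx y hy hxy
    by_contra hne
    wlog hlt : x < y generalizing x y
    · exact this hy hx hxy.symm (Ne.symm hne) ((Ne.symm hne).lt_of_le (not_lt.1 hlt))
    obtain ⟨q, hqF, hxq, hqy⟩ := hF x hx y hy hlt
    have : q ∈ ratCut F x := hxy ▸ Finset.mem_filter.2 ⟨hqF, hqy⟩
    exact (Finset.mem_filter.1 this).2.not_gt hxq
  refine ⟨Encodable.encode (F, (s.filter P).image (ratCut F)), fun x hx => ?_⟩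
  simp only [cutSet, mem_image, Encodable.encode_inj, exists_eq_right, mem_ofPred_eq,
    Finset.mem_image, Finset.mem_filter]
  exact ⟨fun ⟨y, ⟨hy, hPy⟩, hyx⟩ => hcut hy hx hyx ▸ hPy, fun hPx => ⟨x, ⟨hx, hPx⟩, rfl⟩⟩

noncomputable def linftyIndicator {ι : Type*} (S : Set ι) : ℓ^∞(ι, ℝ) :=
  ⟨S.indicator 1, memℓp_infty ⟨1, by
    rintro _ ⟨i, rfl⟩
    simpa using norm_indicator_le_norm_self (1 : ι → ℝ) i⟩⟩

theorem linftyIndicator_apply {ι : Type*} (S : Set ι) (i : ι) :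
    (linftyIndicator S : ι → ℝ) i = S.indicator 1 i := rfl

theorem exists_dual_linftyIndicator_cutSet_eq {r : ℕ → ℝ} (hr : Function.Injective r) :
    ∃ φ : StrongDual ℝ ℓ^∞(ℕ, ℝ), ‖φ‖ ≤ 1 ∧
      ∀ m, φ (linftyIndicator (cutSet (r m))) = if Even m then 1 else 0 := by
  let C : ℕ → Set ℕ := fun M => {n | ∀ m ≤ M, n ∈ cutSet (r m) ↔ Even m}
  have hC : ∀ M, (C M).Nonempty := fun M => by
    obtain ⟨n, hn⟩ := exists_forall_mem_cutSet_iff ((Finset.range (M + 1)).image r)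
      (fun x => ∃ m, r m = x ∧ Even m)
    refine ⟨n, fun m hm => (hn (r m) (Finset.mem_image_of_mem _ ?_)).trans ?_⟩
    · exact Finset.mem_range.2 (Nat.lt_succ_of_le hm)
    · exact ⟨fun ⟨k, hk, he⟩ => hr hk ▸ he, fun he => ⟨m, rfl, he⟩⟩
  have hC_anti : Antitone fun M => 𝓟 (C M) := fun M N hMN =>
    principal_mono.2 fun n hn m hm => hn m (hm.trans hMN)
  have : (⨅ M, 𝓟 (C M)).NeBot :=
    iInf_neBot_of_directed' hC_anti.directed_ge fun M => (hC M).principal_neBot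
  let V := Ultrafilter.of (⨅ M, 𝓟 (C M))
  obtain ⟨φ, hφ, hlim⟩ := exists_tendsto_ultrafilter_of_norm_le V
    (fun n => lp.evalCLM ℝ (fun _ : ℕ => ℝ) ⊤ n)
    (fun n => LinearMap.mkContinuous_norm_le _ zero_le_one _)
  refine ⟨φ, hφ, fun m => tendsto_nhds_unique (hlim _) (tendsto_const_nhds.congr' ?_)⟩
  have hCm : C m ∈ V := Ultrafilter.of_le _ (mem_iInf_of_mem m (mem_principal_self _))
  filter_upwards [hCm] with n hn
  simp only [lp.evalCLM, LinearMap.mkContinuous_apply, lp.evalₗ_apply, linftyIndicator_apply]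
  classical
  rw [indicator_apply, Pi.one_apply]
  exact if_congr (hn m le_rfl).symm rfl rfl

end IndependentFamily

theorem not_tendsto_of_abs_sub_ite_even_le {u : ℕ → ℝ} {δ : ℝ} (hδ : δ < 1 / 2)
    (hu : ∀ m, |u m - if Even m then 1 else 0| ≤ δ) (l : ℝ) : ¬Tendsto u atTop (𝓝 l) := by
  intro hl
  have h_even : 1 - δ ≤ l := by
    refine ge_of_tendsto (hl.comp (strictMono_id.const_mul two_pos).tendsto_atTop)
      (Eventually.of_forall fun j => ?_)
    have := abs_le.1 (hu (2 * j))
    simp only [even_two_mul, if_true] at this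
    simp only [Function.comp_apply, id]
    linarith
  have h_odd : l ≤ δ := by
    refine le_of_tendsto (hl.comp ((strictMono_id.const_mul two_pos).add_const 1).tendsto_atTop)
      (Eventually.of_forall fun j => ?_)
    have := abs_le.1 (hu (2 * j + 1))
    simp only [Nat.not_even_two_mul_add_one, if_false, sub_zero] at this
    simp only [Function.comp_apply, id]
    linarith
  linarith

theorem WPG_no_linfty_subspace_general
    {X : Type*} [NormedAddCommGroup X] [NormedSpace ℝ X]
    (hWPG : ∃ K : Set X, WeaklyPrecompact K ∧
      closure ((Submodule.span ℝ K : Submodule ℝ X) : Set X) = Set.univ) :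
    ¬ ∃ (e : (lp (fun _ : ℕ => ℝ) ⊤) →L[ℝ] X) (c : ℝ), 0 < c ∧
      ∀ v : lp (fun _ : ℕ => ℝ) ⊤, c * ‖v‖ ≤ ‖e v‖ := by
  rintro ⟨e, c, hc, he⟩
  obtain ⟨K, hK, hdense⟩ := hWPG
  obtain ⟨r, hr, Y, hY, hYξ⟩ := hK.exists_weaklyCauchySeq_near hdense
    (fun x => e (linftyIndicator (cutSet x))) (by positivity : 0 < c / 4)
  obtain ⟨φ, hφ, hφr⟩ := exists_dual_linftyIndicator_cutSet_eq hr
  obtain ⟨h, hhe, hh⟩ := exists_extension_of_mul_norm_le_norm_apply e hc he φ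
  obtain ⟨l, hl⟩ := hY h
  refine not_tendsto_of_abs_sub_ite_even_le (by norm_num : (1 : ℝ) / 4 < 1 / 2) (fun m => ?_) l hl
  rw [← hφr, ← hhe, ← map_sub]
  calc |h (Y m - e _)| ≤ ‖h‖ * ‖Y m - e _‖ := h.le_opNorm _
    _ ≤ 1 / c * (c / 4) := by
      gcongr
      · exact hh.trans (div_le_div_of_nonneg_right hφ hc.le)
      · rw [← dist_eq_norm, dist_comm]
        exact (hYξ m).le
    _ = 1 / 4 := by field_simp

/-- a weakly precompactly generated Banach space contains no subspace
isomorphic to ℓ∞. -/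
theorem WPG_no_linfty_subspace
    {X : Type*} [NormedAddCommGroup X] [NormedSpace ℝ X] [CompleteSpace X]
    (hWPG : ∃ K : Set X, WeaklyPrecompact K ∧
      closure ((Submodule.span ℝ K : Submodule ℝ X) : Set X) = Set.univ) :
    ¬ ∃ (e : (lp (fun _ : ℕ => ℝ) ⊤) →L[ℝ] X) (c : ℝ), 0 < c ∧
      ∀ v : lp (fun _ : ℕ => ℝ) ⊤, c * ‖v‖ ≤ ‖e v‖ :=
  WPG_no_linfty_subspace_general hWPG
end

section
/- Let X be a Banach space and Y ⊆ X a closed subspace containing no isomorphic copy of ℓ₁. If the quotient X/Y is weakly precompactly generated, then X is weakly precompactly generated. -/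
open Filter Topology Set

/-!
Lift a weakly precompact set `K` generating `Z ≅ X/Y` boundedly to a set `G ⊆ X` (open mapping
theorem). By Rosenthal's `ℓ₁` theorem the unit ball of `Y` is weakly precompact, and so is `G`:
a bounded sequence in `X` whose image in `Z` is weakly Cauchy but which has no weakly Cauchy
subsequence has an `ℓ₁`-subsequence; the differences of its consecutive pairs are again `ℓ₁`
with weakly null images, so by Mazur's lemma disjoint convex blocks of them have images of small
norm, and a small correction moves these blocks into `Y` without destroying the `ℓ₁` estimate.
Finally `G` together with the unit ball of `Y` spans a dense subspace: the closure of its span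
contains `Y`, hence is saturated for the open quotient map, and its image is closed and dense.
-/

open Function

theorem Set.Infinite.exists_strictMono_fusion {M : Set ℕ} (hM : M.Infinite)
    {Q : ℕ → Set ℕ → Prop} (hQ : ∀ n M₁ M₂, Q n M₁ → (M₂ \ M₁).Finite → Q n M₂)
    (h : ∀ n ∈ M, ∀ M' ⊆ M, M'.Infinite → ∃ M'' ⊆ M', M''.Infinite ∧ Q n M'') :
    ∃ m : ℕ → ℕ, StrictMono m ∧ (∀ k, m k ∈ M) ∧ ∀ k, Q (m k) (range m) := by
  let State := {p : ℕ × Set ℕ // p.1 ∈ p.2 ∧ p.2 ⊆ M ∧ p.2.Infinite}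
  have step : ∀ σ : State, ∃ τ : State, σ.1.1 < τ.1.1 ∧ τ.1.2 ⊆ σ.1.2 ∧ Q σ.1.1 τ.1.2 := by
    rintro ⟨⟨n, M'⟩, hn, hM'M, hM'⟩
    obtain ⟨M'', hM''M', hM'', hQn⟩ := h n (hM'M hn) M' hM'M hM'
    obtain ⟨n', hn', hnn'⟩ := hM''.exists_gt n
    exact ⟨⟨⟨n', M''⟩, hn', hM''M'.trans hM'M, hM''⟩, hnn', hM''M', hQn⟩
  choose next hlt hsub hQnext using step
  obtain ⟨n₀, hn₀⟩ := hM.nonempty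
  let σ : ℕ → State := fun k => next^[k] ⟨⟨n₀, M⟩, hn₀, subset_rfl, hM⟩
  have hσ : ∀ k, σ (k + 1) = next (σ k) := fun k => Function.iterate_succ_apply' _ _ _
  have hanti : Antitone fun k => (σ k).1.2 :=
    antitone_nat_of_succ_le fun k => hσ k ▸ hsub (σ k)
  refine ⟨fun k => (σ k).1.1, strictMono_nat_of_lt_succ fun k => hσ k ▸ hlt (σ k),
    fun k => (σ k).2.2.1 (σ k).2.1, fun k => hQ _ _ _ (hσ k ▸ hQnext (σ k)) ?_⟩
  refine ((finite_le_nat k).image fun j => (σ j).1.1).subset ?_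
  rintro _ ⟨⟨j, rfl⟩, hj⟩
  refine ⟨j, show j ≤ k from not_lt.1 fun hkj => hj ?_, rfl⟩
  exact hanti (Nat.succ_le_of_lt hkj) (σ j).2.1

theorem exists_strictMono_diagonal {Q : ℕ → Set ℕ → Prop}
    (hQ : ∀ n M₁ M₂, Q n M₁ → (M₂ \ M₁).Finite → Q n M₂)
    (h : ∀ n, ∀ M : Set ℕ, M.Infinite → ∃ M' ⊆ M, M'.Infinite ∧ Q n M') :
    ∃ m : ℕ → ℕ, StrictMono m ∧ ∀ n, Q n (range m) := by
  have hupto : ∀ n, ∀ M : Set ℕ, M.Infinite → ∃ M' ⊆ M, M'.Infinite ∧ ∀ j ≤ n, Q j M' := by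
    intro n
    induction n with
    | zero =>
      intro M hM
      obtain ⟨M', hM'M, hM', hQM'⟩ := h 0 M hM
      exact ⟨M', hM'M, hM', fun j hj => Nat.le_zero.1 hj ▸ hQM'⟩
    | succ n ih =>
      intro M hM
      obtain ⟨M₁, hM₁M, hM₁, hQM₁⟩ := ih M hM
      obtain ⟨M₂, hM₂M₁, hM₂, hQM₂⟩ := h (n + 1) M₁ hM₁
      refine ⟨M₂, hM₂M₁.trans hM₁M, hM₂, fun j hj => ?_⟩
      rcases Nat.le_succ_iff.1 hj with hj | rfl
      exacts [hQ j M₁ M₂ (hQM₁ j hj) (by simp [sdiff_eq_empty.2 hM₂M₁]), hQM₂]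
  obtain ⟨m, hm, -, hQm⟩ := infinite_univ.exists_strictMono_fusion (Q := fun n M => ∀ j ≤ n, Q j M)
    (fun _ M₁ M₂ hQM₁ hfin j hj => hQ j M₁ M₂ (hQM₁ j hj) hfin) fun n _ M _ hM => hupto n M hM
  exact ⟨m, hm, fun n => hQm n n (hm.le_apply)⟩

namespace Rosenthal

variable {S : Type*} {A B : ℕ → Set S}

def Oscillates (A B : ℕ → Set S) (x : S) (M : Set ℕ) : Prop :=
  {n ∈ M | x ∈ A n}.Infinite ∧ {n ∈ M | x ∈ B n}.Infinite

def Large (A B : ℕ → Set S) (C : Set S) (M : Set ℕ) : Prop :=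
  ∀ M' ⊆ M, M'.Infinite → ∃ x ∈ C, Oscillates A B x M'

def Independent (A B : ℕ → Set S) : Prop :=
  ∀ F G : Finset ℕ, Disjoint F G → ∃ x, (∀ k ∈ F, x ∈ A k) ∧ ∀ k ∈ G, x ∈ B k

theorem Oscillates.of_diff_finite {x : S} {M₁ M₂ : Set ℕ} (h : Oscillates A B x M₁)
    (hfin : (M₁ \ M₂).Finite) : Oscillates A B x M₂ :=
  ⟨((h.1.sdiff hfin).mono fun _ hn => ⟨not_not.1 fun h' => hn.2 ⟨hn.1.1, h'⟩, hn.1.2⟩),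
    ((h.2.sdiff hfin).mono fun _ hn => ⟨not_not.1 fun h' => hn.2 ⟨hn.1.1, h'⟩, hn.1.2⟩)⟩

theorem Oscillates.mono {x : S} {M₁ M₂ : Set ℕ} (h : Oscillates A B x M₁) (hM : M₁ ⊆ M₂) :
    Oscillates A B x M₂ :=
  h.of_diff_finite (by simp [sdiff_eq_empty.2 hM])

theorem exists_infinite_not_oscillates_of_not_large {C : Set S} {M : Set ℕ}
    (h : ¬ Large A B C M) : ∃ M' ⊆ M, M'.Infinite ∧ ∀ x ∈ C, ¬ Oscillates A B x M' := by
  simpa [Large] using h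

theorem Large.exists_refine {ι : Type*} [Finite ι] {C : ι → Set S} {M : Set ℕ}
    (hM : M.Infinite) (hC : ∀ i, Large A B (C i) M) (N : ℕ) :
    ∃ n, N < n ∧ ∃ M' : Set ℕ, M'.Infinite ∧
      ∀ i, Large A B (C i ∩ A n) M' ∧ Large A B (C i ∩ B n) M' := by
  by_contra h
  let Q : ℕ → Set ℕ → Prop := fun n M' =>
    ∃ (i : ι) (b : Bool), ∀ x ∈ C i ∩ (bif b then A n else B n), ¬ Oscillates A B x M'
  have hQ : ∀ n M₁ M₂, Q n M₁ → (M₂ \ M₁).Finite → Q n M₂ := fun _ _ _ ⟨i, b, hx⟩ hfin =>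
    ⟨i, b, fun x hxC hosc => hx x hxC (hosc.of_diff_finite hfin)⟩
  have hkill : ∀ n ∈ M \ Iic N, ∀ M' ⊆ M \ Iic N, M'.Infinite →
      ∃ M'' ⊆ M', M''.Infinite ∧ Q n M'' := by
    intro n hn M' _ hM'
    obtain ⟨i, hi⟩ : ∃ i, ¬ (Large A B (C i ∩ A n) M' ∧ Large A B (C i ∩ B n) M') := by
      by_contra! hall
      exact h ⟨n, not_le.1 hn.2, M', hM', hall⟩
    rcases not_and_or.1 hi with hA | hB
    · obtain ⟨M'', hM''M', hM'', hx⟩ := exists_infinite_not_oscillates_of_not_large hA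
      exact ⟨M'', hM''M', hM'', i, true, hx⟩
    · obtain ⟨M'', hM''M', hM'', hx⟩ := exists_infinite_not_oscillates_of_not_large hB
      exact ⟨M'', hM''M', hM'', i, false, hx⟩
  obtain ⟨m, hm, hmM, hQm⟩ := (hM.sdiff (finite_Iic N)).exists_strictMono_fusion hQ hkill
  choose i b hmkill using hQm
  -- pigeonhole: one cell and one side are responsible for infinitely many `m k`
  obtain ⟨⟨i₀, b₀⟩, hT⟩ := Finite.exists_infinite_fiber fun k => (i k, b k)
  set T := (fun k => (i k, b k)) ⁻¹' {(i₀, b₀)}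
  have hP : (m '' T).Infinite := (infinite_coe_iff.1 hT).image hm.injective.injOn
  obtain ⟨x, hxC, hosc⟩ := hC i₀ (m '' T) (image_subset_iff.2 fun k _ => (hmM k).1) hP
  obtain ⟨_, ⟨k, hkT, rfl⟩, hxk⟩ : ∃ n ∈ m '' T, x ∈ bif b₀ then A n else B n := by
    cases b₀
    exacts [hosc.2.nonempty, hosc.1.nonempty]
  obtain ⟨hik, hbk⟩ : i k = i₀ ∧ b k = b₀ := Prod.ext_iff.1 hkT
  exact hmkill k x ⟨hik ▸ hxC, hbk ▸ hxk⟩ (hosc.mono (image_subset_range m T))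

theorem exists_cell_of_disjoint {𝒞 : ℕ → Set (Set S)} {l : ℕ → ℕ} (h0 : univ ∈ 𝒞 0)
    (hA : ∀ k, ∀ C ∈ 𝒞 k, C ∩ A (l k) ∈ 𝒞 (k + 1)) (hB : ∀ k, ∀ C ∈ 𝒞 k, C ∩ B (l k) ∈ 𝒞 (k + 1))
    {F G : Finset ℕ} (hFG : Disjoint F G) (k : ℕ) :
    ∃ C ∈ 𝒞 k, ∀ x ∈ C, (∀ i ∈ F, i < k → x ∈ A (l i)) ∧ ∀ i ∈ G, i < k → x ∈ B (l i) := by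
  induction k with
  | zero => exact ⟨univ, h0, fun _ _ => ⟨fun _ _ h => absurd h (Nat.not_lt_zero _),
      fun _ _ h => absurd h (Nat.not_lt_zero _)⟩⟩
  | succ k ih =>
    obtain ⟨C, hC, hCx⟩ := ih
    by_cases hkF : k ∈ F
    · refine ⟨C ∩ A (l k), hA k C hC, fun x hx => ⟨fun i hi hik => ?_, fun i hi hik => ?_⟩⟩
      · rcases Nat.lt_succ_iff_lt_or_eq.1 hik with hik | rfl
        exacts [(hCx x hx.1).1 i hi hik, hx.2]
      · rcases Nat.lt_succ_iff_lt_or_eq.1 hik with hik | rfl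
        exacts [(hCx x hx.1).2 i hi hik, absurd hi (Finset.disjoint_left.1 hFG hkF)]
    · refine ⟨C ∩ B (l k), hB k C hC, fun x hx => ⟨fun i hi hik => ?_, fun i hi hik => ?_⟩⟩
      · rcases Nat.lt_succ_iff_lt_or_eq.1 hik with hik | rfl
        exacts [(hCx x hx.1).1 i hi hik, absurd hi hkF]
      · rcases Nat.lt_succ_iff_lt_or_eq.1 hik with hik | rfl
        exacts [(hCx x hx.1).2 i hi hik, hx.2]

theorem Large.exists_strictMono_independent {M : Set ℕ} (hM : M.Infinite)
    (hL : Large A B univ M) : ∃ l : ℕ → ℕ, StrictMono l ∧ Independent (A ∘ l) (B ∘ l) := by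
  -- a state `(n, M, 𝒞)`: the last chosen index, the current infinite set and the current cells
  let State := {p : ℕ × Set ℕ × Set (Set S) //
    p.2.1.Infinite ∧ p.2.2.Finite ∧ ∀ C ∈ p.2.2, Large A B C p.2.1}
  have step : ∀ σ : State, ∃ τ : State, σ.1.1 < τ.1.1 ∧
      τ.1.2.2 = (· ∩ A τ.1.1) '' σ.1.2.2 ∪ (· ∩ B τ.1.1) '' σ.1.2.2 := by
    rintro ⟨⟨n, M', 𝒞⟩, hM', h𝒞, hL'⟩
    have := h𝒞.to_subtype
    obtain ⟨n', hnn', M'', hM'', hL''⟩ :=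
      Large.exists_refine (C := ((↑) : 𝒞 → Set S)) hM' (fun C => hL' C C.2) n
    refine ⟨⟨⟨n', M'', (· ∩ A n') '' 𝒞 ∪ (· ∩ B n') '' 𝒞⟩, hM'',
      (h𝒞.image _).union (h𝒞.image _), ?_⟩, hnn', rfl⟩
    rintro _ (⟨C, hC, rfl⟩ | ⟨C, hC, rfl⟩)
    exacts [(hL'' ⟨C, hC⟩).1, (hL'' ⟨C, hC⟩).2]
  choose next hlt hcells using step
  let σ : ℕ → State := fun k =>
    next^[k] ⟨⟨0, M, {univ}⟩, hM, finite_singleton _, by simpa using hL⟩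
  have hσ : ∀ k, σ (k + 1) = next (σ k) := fun k => Function.iterate_succ_apply' _ _ _
  let l : ℕ → ℕ := fun k => (σ (k + 1)).1.1
  refine ⟨l, strictMono_nat_of_lt_succ fun k => by simpa only [l, hσ (k + 1)] using hlt _, ?_⟩
  intro F G hFG
  have hcells' : ∀ k, (σ (k + 1)).1.2.2 =
      (· ∩ A (l k)) '' (σ k).1.2.2 ∪ (· ∩ B (l k)) '' (σ k).1.2.2 := fun k => by
    simp only [l, hσ k, hcells]
  have hcell := exists_cell_of_disjoint (𝒞 := fun k => (σ k).1.2.2) (mem_singleton univ)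
    (fun k C hC => by rw [hcells' k]; exact Or.inl ⟨C, hC, rfl⟩)
    (fun k C hC => by rw [hcells' k]; exact Or.inr ⟨C, hC, rfl⟩) hFG
  obtain ⟨k, hk⟩ := (F ∪ G).exists_nat_subset_range
  obtain ⟨C, hC, hCx⟩ := hcell k
  obtain ⟨x, hxC, -⟩ := (σ k).2.2.2 C hC _ subset_rfl (σ k).2.1
  exact ⟨x, fun i hi => (hCx x hxC).1 i hi (Finset.mem_range.1 (hk (Finset.mem_union_left _ hi))),
    fun i hi => (hCx x hxC).2 i hi (Finset.mem_range.1 (hk (Finset.mem_union_right _ hi)))⟩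

end Rosenthal

section EllOne

variable {E : Type*} [NormedAddCommGroup E] [NormedSpace ℝ E]

def IsWeaklyCauchy (x : ℕ → E) : Prop :=
  ∀ f : E →L[ℝ] ℝ, ∃ l, Tendsto (fun n => f (x n)) atTop (𝓝 l)

def EllOneLowerBound (c : ℝ) (x : ℕ → E) : Prop :=
  ∀ (t : Finset ℕ) (a : ℕ → ℝ), c * ∑ k ∈ t, |a k| ≤ ‖∑ k ∈ t, a k • x k‖

variable (E) in
def EmbedsEllOne : Prop :=
  ∃ (e : lp (fun _ : ℕ => ℝ) 1 →L[ℝ] E) (c : ℝ), 0 < c ∧ ∀ v, c * ‖v‖ ≤ ‖e v‖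

theorem isWeaklyCauchy_of_forall_norm_le_one {x : ℕ → E}
    (h : ∀ f : E →L[ℝ] ℝ, ‖f‖ ≤ 1 → ∃ l, Tendsto (fun n => f (x n)) atTop (𝓝 l)) :
    IsWeaklyCauchy x := by
  intro f
  have hpos : 0 < ‖f‖ + 1 := by positivity
  obtain ⟨l, hl⟩ := h ((‖f‖ + 1)⁻¹ • f) <| by
    rw [norm_smul, norm_inv, Real.norm_of_nonneg hpos.le]
    exact inv_mul_le_one_of_le₀ (by linarith) hpos.le
  refine ⟨(‖f‖ + 1) * l, (hl.const_mul (‖f‖ + 1)).congr fun n => ?_⟩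
  simp [hpos.ne']

theorem ellOneLowerBound_of_forall_exists_separating {x : ℕ → E} {r s : ℝ}
    (h : ∀ F G : Finset ℕ, Disjoint F G → ∃ f : E →L[ℝ] ℝ, ‖f‖ ≤ 1 ∧
      (∀ k ∈ F, f (x k) ≤ r) ∧ ∀ k ∈ G, s ≤ f (x k)) :
    EllOneLowerBound ((s - r) / 2) x := by
  classical
  intro t a
  have hdisj : Disjoint (t.filter (a · < 0)) (t.filter (0 ≤ a ·)) :=
    Finset.disjoint_filter.2 fun _ _ hneg hnonneg => not_le.2 hneg hnonneg
  obtain ⟨f, hf, hfneg, hfpos⟩ := h _ _ hdisj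
  obtain ⟨g, hg, hgpos, hgneg⟩ := h _ _ hdisj.symm
  have hterm : ∀ k ∈ t, (s - r) * |a k| ≤ (f - g) (a k • x k) := by
    intro k hk
    simp only [map_smul, smul_eq_mul, sub_apply]
    rcases lt_or_ge (a k) 0 with ha | ha
    · have := hfneg k (Finset.mem_filter.2 ⟨hk, ha⟩)
      have := hgneg k (Finset.mem_filter.2 ⟨hk, ha⟩)
      rw [abs_of_neg ha]
      nlinarith
    · have := hfpos k (Finset.mem_filter.2 ⟨hk, ha⟩)
      have := hgpos k (Finset.mem_filter.2 ⟨hk, ha⟩)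
      rw [abs_of_nonneg ha]
      nlinarith
  have hfg : ‖f - g‖ ≤ 2 := (norm_sub_le f g).trans (by linarith)
  calc (s - r) / 2 * ∑ k ∈ t, |a k| = (∑ k ∈ t, (s - r) * |a k|) / 2 := by
        rw [← Finset.mul_sum]; ring
    _ ≤ (f - g) (∑ k ∈ t, a k • x k) / 2 := by
        rw [map_sum]; gcongr with k hk; exact hterm k hk
    _ ≤ ‖∑ k ∈ t, a k • x k‖ := by
        have := (le_abs_self _).trans ((f - g).le_of_opNorm_le hfg (∑ k ∈ t, a k • x k))
        linarith

def ballSublevel (x : ℕ → E) (r : ℝ) (n : ℕ) : Set (Metric.closedBall (0 : E →L[ℝ] ℝ) 1) :=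
  {f | (f : E →L[ℝ] ℝ) (x n) ≤ r}

def ballSuperlevel (x : ℕ → E) (s : ℝ) (n : ℕ) : Set (Metric.closedBall (0 : E →L[ℝ] ℝ) 1) :=
  {f | s ≤ (f : E →L[ℝ] ℝ) (x n)}

theorem exists_infinite_not_oscillates_of_not_ellOneLowerBound {x : ℕ → E}
    (hℓ : ¬ ∃ (φ : ℕ → ℕ) (c : ℝ), StrictMono φ ∧ 0 < c ∧ EllOneLowerBound c (x ∘ φ))
    {r s : ℝ} (hrs : r < s) {M : Set ℕ} (hM : M.Infinite) :
    ∃ M' ⊆ M, M'.Infinite ∧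
      ∀ f, ¬ Rosenthal.Oscillates (ballSublevel x r) (ballSuperlevel x s) f M' := by
  by_contra! hL
  obtain ⟨l, hl, hind⟩ := Rosenthal.Large.exists_strictMono_independent hM
    fun M' hM'M hM' => (hL M' hM'M hM').imp fun f hf => ⟨mem_univ f, hf⟩
  refine hℓ ⟨l, (s - r) / 2, hl, by linarith,
    ellOneLowerBound_of_forall_exists_separating fun F G hFG => ?_⟩
  obtain ⟨f, hfF, hfG⟩ := hind F G hFG
  exact ⟨f, mem_closedBall_zero_iff.1 f.2, hfF, hfG⟩

/-- Rosenthal's `ℓ₁` theorem. -/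
theorem exists_weaklyCauchy_or_ellOneLowerBound_subseq {x : ℕ → E} {C : ℝ}
    (hx : ∀ n, ‖x n‖ ≤ C) :
    (∃ φ : ℕ → ℕ, StrictMono φ ∧ IsWeaklyCauchy (x ∘ φ)) ∨
      ∃ (φ : ℕ → ℕ) (c : ℝ), StrictMono φ ∧ 0 < c ∧ EllOneLowerBound c (x ∘ φ) := by
  refine or_iff_not_imp_right.2 fun hℓ => ?_
  obtain ⟨e, he⟩ := exists_surjective_nat (ℚ × ℚ)
  obtain ⟨m, hm, hQm⟩ := exists_strictMono_diagonal
    (Q := fun j M => ((e j).1 : ℝ) < (e j).2 →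
      ∀ f, ¬ Rosenthal.Oscillates (ballSublevel x (e j).1) (ballSuperlevel x (e j).2) f M)
    (fun _ _ _ hQ hfin hlt f hosc => hQ hlt f (hosc.of_diff_finite hfin))
    fun j M hM => if hlt : ((e j).1 : ℝ) < (e j).2 then
      (exists_infinite_not_oscillates_of_not_ellOneLowerBound hℓ hlt hM).imp
        fun _ h => ⟨h.1, h.2.1, fun _ => h.2.2⟩
      else ⟨M, subset_rfl, hM, fun h => absurd h hlt⟩
  -- along `m` no functional of the unit ball oscillates across a rational gap
  refine ⟨m, hm, isWeaklyCauchy_of_forall_norm_le_one fun f hf => ?_⟩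
  have hbound : ∀ n, |f (x (m n))| ≤ C := fun n =>
    (f.le_of_opNorm_le hf _).trans (by simpa using hx (m n))
  have hrange : ∀ P : ℕ → Prop, (∃ᶠ k in atTop, P (m k)) → {n ∈ range m | P n}.Infinite :=
    fun P hP => ((Nat.frequently_atTop_iff_infinite.1 hP).image hm.injective.injOn).mono
      (by rintro _ ⟨k, hk, rfl⟩; exact ⟨⟨k, rfl⟩, hk⟩)
  refine tendsto_of_no_upcrossings Rat.denseRange_cast ?_
    (isBoundedUnder_of ⟨C, fun n => (abs_le.1 (hbound n)).2⟩)
    (isBoundedUnder_of ⟨-C, fun n => (abs_le.1 (hbound n)).1⟩)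
  rintro _ ⟨a, rfl⟩ _ ⟨b, rfl⟩ hab ⟨hlow, hhigh⟩
  obtain ⟨j, hj⟩ := he (a, b)
  refine hQm j (by simpa [hj] using hab) ⟨f, mem_closedBall_zero_iff.2 hf⟩ ?_
  rw [hj]
  exact ⟨(hrange (fun n => f (x n) < a) hlow).mono fun n hn => ⟨hn.1, hn.2.le⟩,
    (hrange (fun n => (b : ℝ) < f (x n)) hhigh).mono fun n hn => ⟨hn.1, hn.2.le⟩⟩

theorem IsWeaklyCauchy.comp_strictMono {x : ℕ → E} (hx : IsWeaklyCauchy x) {φ : ℕ → ℕ}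
    (hφ : StrictMono φ) : IsWeaklyCauchy (x ∘ φ) :=
  fun f => (hx f).imp fun _ hl => hl.comp hφ.tendsto_atTop

theorem IsWeaklyCauchy.exists_norm_le {x : ℕ → E} (hx : IsWeaklyCauchy x) :
    ∃ C, ∀ n, ‖x n‖ ≤ C := by
  obtain ⟨C, hC⟩ := banach_steinhaus (g := fun n => NormedSpace.inclusionInDoubleDual ℝ E (x n))
    fun f => by
      obtain ⟨C, hC⟩ := ((hx f).choose_spec.norm).bddAbove_range
      exact ⟨C, fun n => hC ⟨n, rfl⟩⟩
  exact ⟨C, fun n => (NormedSpace.inclusionInDoubleDualLi ℝ (E := E)).norm_map (x n) ▸ hC n⟩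

def pairDiff (x : ℕ → E) (k : ℕ) : E := x (2 * k) - x (2 * k + 1)

theorem IsWeaklyCauchy.tendsto_pairDiff {x : ℕ → E} (hx : IsWeaklyCauchy x) (f : E →L[ℝ] ℝ) :
    Tendsto (fun k => f (pairDiff x k)) atTop (𝓝 0) := by
  obtain ⟨l, hl⟩ := hx f
  have heven : Tendsto (fun k => 2 * k) atTop atTop :=
    tendsto_atTop_mono (fun k => show k ≤ _ by omega) tendsto_id
  have hodd : Tendsto (fun k => 2 * k + 1) atTop atTop :=
    tendsto_atTop_mono (fun k => show k ≤ _ by omega) tendsto_id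
  simpa [pairDiff] using (hl.comp heven).sub (hl.comp hodd)

theorem EllOneLowerBound.sum_blocks {c : ℝ} {x : ℕ → E} (hx : EllOneLowerBound c x) (hc : 0 ≤ c)
    {F : ℕ → Finset ℕ} (hF : Pairwise (Disjoint on F)) {μ : ℕ → ℕ → ℝ}
    (hμ : ∀ k, 1 ≤ ∑ j ∈ F k, |μ k j|) :
    EllOneLowerBound c fun k => ∑ j ∈ F k, μ k j • x j := by
  intro t a
  -- on the block `F k`, the combination `∑ₖ aₖ ∑ⱼ μₖⱼ xⱼ` has coefficients `b j = a k * μ k j`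
  let owner : ℕ → ℕ := fun j => Classical.epsilon fun k => j ∈ F k
  have howner : ∀ k, ∀ j ∈ F k, owner j = k := fun k j hj => by
    have hmem : j ∈ F (owner j) := Classical.epsilon_spec (p := fun k => j ∈ F k) ⟨k, hj⟩
    by_contra hne
    exact Finset.disjoint_left.1 (hF hne) hmem hj
  let b : ℕ → ℝ := fun j => a (owner j) * μ (owner j) j
  have hb : ∀ k, ∀ j ∈ F k, b j = a k * μ k j := fun k j hj => by simp only [b, howner k j hj]
  have hdisj : (t : Set ℕ).PairwiseDisjoint F := hF.set_pairwise _
  calc c * ∑ k ∈ t, |a k| ≤ c * ∑ k ∈ t, ∑ j ∈ F k, |b j| := by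
        gcongr with k hk
        calc |a k| ≤ |a k| * ∑ j ∈ F k, |μ k j| := le_mul_of_one_le_right (abs_nonneg _) (hμ k)
          _ = ∑ j ∈ F k, |b j| := by
            rw [Finset.mul_sum]
            exact Finset.sum_congr rfl fun j hj => by rw [hb k j hj, abs_mul]
    _ = c * ∑ j ∈ t.biUnion F, |b j| := by rw [Finset.sum_biUnion hdisj]
    _ ≤ ‖∑ j ∈ t.biUnion F, b j • x j‖ := hx _ b
    _ = ‖∑ k ∈ t, a k • ∑ j ∈ F k, μ k j • x j‖ := by
        rw [Finset.sum_biUnion hdisj]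
        congr 1
        refine Finset.sum_congr rfl fun k _ => ?_
        rw [Finset.smul_sum]
        exact Finset.sum_congr rfl fun j hj => by rw [hb k j hj, mul_smul]

theorem EllOneLowerBound.pairDiff {c : ℝ} {x : ℕ → E} (hx : EllOneLowerBound c x) (hc : 0 ≤ c) :
    EllOneLowerBound c (pairDiff x) := by
  have hblocks := hx.sum_blocks hc (F := fun k => {2 * k, 2 * k + 1})
    (μ := fun k j => if j = 2 * k then 1 else -1)
    (fun k k' hkk' => Finset.disjoint_left.2 fun j hj hj' => by
      simp only [Finset.mem_insert, Finset.mem_singleton] at hj hj'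
      omega)
    fun k => by rw [Finset.sum_pair (by omega)]; simp
  convert hblocks using 2 with k
  rw [Finset.sum_pair (by omega)]
  simp [_root_.pairDiff, sub_eq_add_neg]

theorem EllOneLowerBound.sub {c δ : ℝ} {x v : ℕ → E} (hx : EllOneLowerBound c x)
    (hv : ∀ k, ‖v k‖ ≤ δ) : EllOneLowerBound (c - δ) (x - v) := by
  intro t a
  have hsmall : ‖∑ k ∈ t, a k • v k‖ ≤ δ * ∑ k ∈ t, |a k| := by
    calc ‖∑ k ∈ t, a k • v k‖ ≤ ∑ k ∈ t, ‖a k • v k‖ := norm_sum_le _ _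
      _ ≤ ∑ k ∈ t, δ * |a k| := by
        gcongr with k
        rw [norm_smul, Real.norm_eq_abs, mul_comm]
        exact mul_le_mul_of_nonneg_right (hv k) (abs_nonneg _)
      _ = δ * ∑ k ∈ t, |a k| := (Finset.mul_sum _ _ _).symm
  calc (c - δ) * ∑ k ∈ t, |a k| ≤ ‖∑ k ∈ t, a k • x k‖ - ‖∑ k ∈ t, a k • v k‖ := by
        rw [sub_mul]; exact sub_le_sub (hx t a) hsmall
    _ ≤ ‖∑ k ∈ t, a k • x k - ∑ k ∈ t, a k • v k‖ := norm_sub_norm_le _ _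
    _ = ‖∑ k ∈ t, a k • (x - v) k‖ := by simp [smul_sub, Finset.sum_sub_distrib]

theorem EllOneLowerBound.embedsEllOne [CompleteSpace E] {c C : ℝ} {x : ℕ → E}
    (hx : EllOneLowerBound c x) (hc : 0 < c) (hC : ∀ n, ‖x n‖ ≤ C) : EmbedsEllOne E := by
  have hnorm : ∀ v : lp (fun _ : ℕ => ℝ) 1, HasSum (fun k => ‖v k‖) ‖v‖ := fun v => by
    simpa using lp.hasSum_norm (p := 1) (by norm_num) v
  have hle : ∀ (v : lp (fun _ : ℕ => ℝ) 1) k, ‖v k • x k‖ ≤ C * ‖v k‖ := fun v k => by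
    rw [norm_smul, mul_comm]; exact mul_le_mul_of_nonneg_right (hC k) (norm_nonneg _)
  have hsum : ∀ v : lp (fun _ : ℕ => ℝ) 1, Summable fun k => ‖v k • x k‖ := fun v =>
    ((hnorm v).summable.mul_left C).of_nonneg_of_le (fun _ => norm_nonneg _) (hle v)
  let e : lp (fun _ : ℕ => ℝ) 1 →ₗ[ℝ] E :=
    { toFun := fun v => ∑' k, v k • x k
      map_add' := fun v w => by
        simp only [lp.coeFn_add, Pi.add_apply, add_smul]
        exact (hsum v).of_norm.tsum_add (hsum w).of_norm
      map_smul' := fun r v => by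
        simp only [lp.coeFn_smul, Pi.smul_apply, smul_eq_mul, mul_smul, RingHom.id_apply]
        exact (hsum v).of_norm.tsum_const_smul r }
  refine ⟨e.mkContinuous C fun v => ?_, c, hc, fun v => ?_⟩
  · calc ‖∑' k, v k • x k‖ ≤ ∑' k, ‖v k • x k‖ := norm_tsum_le_tsum_norm (hsum v)
      _ ≤ ∑' k, C * ‖v k‖ := (hsum v).tsum_le_tsum (hle v) ((hnorm v).summable.mul_left C)
      _ = C * ‖v‖ := by rw [tsum_mul_left, (hnorm v).tsum_eq]
  · refine le_of_tendsto_of_tendsto' ((hnorm v).tendsto_sum_nat.const_mul c)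
      (hsum v).of_norm.hasSum.tendsto_sum_nat.norm fun N => ?_
    simpa using hx (Finset.range N) (fun k => v k)

theorem Submodule.embedsEllOne_of_ellOneLowerBound (Y : Submodule ℝ E) [CompleteSpace Y]
    {c C : ℝ} {y : ℕ → E} (hy : ∀ n, y n ∈ Y) (hℓ : EllOneLowerBound c y) (hc : 0 < c)
    (hC : ∀ n, ‖y n‖ ≤ C) : EmbedsEllOne Y :=
  EllOneLowerBound.embedsEllOne (x := fun n => ⟨y n, hy n⟩)
    (fun t a => (hℓ t a).trans_eq (by rw [← Submodule.norm_coe]; simp)) hc hC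


theorem exists_sum_eq_of_mem_convexHull_image {z : ℕ → E} {D : Set ℕ} {y : E}
    (hy : y ∈ convexHull ℝ (z '' D)) :
    ∃ (t : Finset ℕ) (μ : ℕ → ℝ), (∀ j ∈ t, j ∈ D) ∧ (∀ j ∈ t, 0 ≤ μ j) ∧
      ∑ j ∈ t, μ j = 1 ∧ ∑ j ∈ t, μ j • z j = y := by
  classical
  rw [convexHull_eq] at hy
  obtain ⟨ι, s, w, p, hw0, hw1, hp, rfl⟩ := hy
  choose! J hJD hJ using hp
  have hmaps : ∀ i ∈ s, J i ∈ s.image J := fun i hi => Finset.mem_image_of_mem J hi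
  refine ⟨s.image J, fun j => ∑ i ∈ s with J i = j, w i, ?_, ?_, ?_, ?_⟩
  · intro j hj
    obtain ⟨i, hi, rfl⟩ := Finset.mem_image.1 hj
    exact hJD i hi
  · exact fun j _ => Finset.sum_nonneg fun i hi => hw0 i (Finset.mem_filter.1 hi).1
  · rw [Finset.sum_fiberwise_of_maps_to hmaps, hw1]
  · rw [Finset.centerMass_eq_of_sum_1 _ _ hw1, ← Finset.sum_fiberwise_of_maps_to hmaps]
    refine Finset.sum_congr rfl fun j _ => ?_
    rw [Finset.sum_smul]
    refine Finset.sum_congr rfl fun i hi => ?_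
    obtain ⟨his, rfl⟩ := Finset.mem_filter.1 hi
    rw [hJ i his]

theorem exists_convexComb_norm_lt_of_tendsto_zero {z : ℕ → E}
    (hz : ∀ f : E →L[ℝ] ℝ, Tendsto (fun n => f (z n)) atTop (𝓝 0)) (m : ℕ) {ε : ℝ} (hε : 0 < ε) :
    ∃ (t : Finset ℕ) (μ : ℕ → ℝ), (∀ j ∈ t, m ≤ j) ∧ (∀ j ∈ t, 0 ≤ μ j) ∧
      ∑ j ∈ t, μ j = 1 ∧ ‖∑ j ∈ t, μ j • z j‖ < ε := by
  -- Mazur: `0` is a weak limit of the tail, and closed convex sets are weakly closed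
  have h0 : (0 : E) ∈ closure (convexHull ℝ (z '' Ici m)) := by
    by_contra h
    obtain ⟨f, u, hfu, hu⟩ :=
      geometric_hahn_banach_closed_point (convex_convexHull ℝ _).closure isClosed_closure h
    rw [map_zero] at hu
    obtain ⟨j, hj, hjm⟩ := (((hz f).eventually (lt_mem_nhds hu)).and (eventually_ge_atTop m)).exists
    exact (hfu _ (subset_closure (subset_convexHull ℝ _ ⟨j, hjm, rfl⟩))).not_gt hj
  obtain ⟨y, hy, hyε⟩ := Metric.mem_closure_iff.1 h0 ε hε
  obtain ⟨t, μ, htm, hμ0, hμ1, rfl⟩ := exists_sum_eq_of_mem_convexHull_image hy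
  exact ⟨t, μ, htm, hμ0, hμ1, by rwa [dist_zero_left] at hyε⟩

theorem exists_disjoint_convexComb_norm_lt_of_tendsto_zero {z : ℕ → E}
    (hz : ∀ f : E →L[ℝ] ℝ, Tendsto (fun n => f (z n)) atTop (𝓝 0)) {ε : ℝ} (hε : 0 < ε) :
    ∃ (F : ℕ → Finset ℕ) (μ : ℕ → ℕ → ℝ), Pairwise (Disjoint on F) ∧ ∀ k,
      (∀ j ∈ F k, 0 ≤ μ k j) ∧ ∑ j ∈ F k, μ k j = 1 ∧ ‖∑ j ∈ F k, μ k j • z j‖ < ε := by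
  let r : Finset ℕ × (ℕ → ℝ) → Finset ℕ × (ℕ → ℝ) → Prop := fun b b' => Disjoint b.1 b'.1
  have : Std.Symm r := ⟨fun _ _ h => h.symm⟩
  obtain ⟨b, hbP, hb⟩ := exists_seq_of_forall_finset_exists'
    (fun b : Finset ℕ × (ℕ → ℝ) => (∀ j ∈ b.1, 0 ≤ b.2 j) ∧ ∑ j ∈ b.1, b.2 j = 1 ∧
      ‖∑ j ∈ b.1, b.2 j • z j‖ < ε) r fun s _ => by
    obtain ⟨N, hN⟩ := (s.biUnion Prod.fst).exists_nat_subset_range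
    obtain ⟨t, μ, htN, hμ⟩ := exists_convexComb_norm_lt_of_tendsto_zero hz N hε
    refine ⟨(t, μ), hμ, fun b hb => Finset.disjoint_left.2 fun j hjb hjt => ?_⟩
    have := Finset.mem_range.1 (hN (Finset.mem_biUnion.2 ⟨b, hb, hjb⟩))
    have := htN j hjt
    omega
  exact ⟨fun k => (b k).1, fun k => (b k).2, hb, hbP⟩

end EllOne

section Quotient

variable {X Z : Type*} [NormedAddCommGroup X] [NormedSpace ℝ X] [CompleteSpace X]
  [NormedAddCommGroup Z] [NormedSpace ℝ Z] [CompleteSpace Z]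

theorem exists_ellOneLowerBound_ker_of_tendsto_zero (q : X →L[ℝ] Z) (hq : Surjective q)
    {c C : ℝ} {x : ℕ → X} (hx : EllOneLowerBound c x) (hc : 0 < c) (hC : ∀ n, ‖x n‖ ≤ C)
    (hqx : ∀ f : Z →L[ℝ] ℝ, Tendsto (fun n => f (q (x n))) atTop (𝓝 0)) :
    ∃ y : ℕ → X, (∀ k, q (y k) = 0) ∧ EllOneLowerBound (c / 2) y ∧ ∀ k, ‖y k‖ ≤ C + c / 2 := by
  obtain ⟨K, hK, hlift⟩ := q.exists_preimage_norm_le hq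
  choose lift hqlift hlift using hlift
  obtain ⟨F, μ, hF, hμ⟩ :=
    exists_disjoint_convexComb_norm_lt_of_tendsto_zero hqx (ε := c / (2 * K)) (by positivity)
  choose hμ0 hμ1 hμq using hμ
  let e : ℕ → X := fun k => ∑ j ∈ F k, μ k j • x j
  have he : EllOneLowerBound c e := hx.sum_blocks hc.le hF fun k => by
    rw [Finset.sum_congr rfl fun j hj => abs_of_nonneg (hμ0 k j hj), hμ1 k]
  have heC : ∀ k, ‖e k‖ ≤ C := fun k => calc
    ‖e k‖ ≤ ∑ j ∈ F k, ‖μ k j • x j‖ := norm_sum_le _ _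
    _ ≤ ∑ j ∈ F k, μ k j * C := Finset.sum_le_sum fun j hj => by
      rw [norm_smul, Real.norm_of_nonneg (hμ0 k j hj)]
      exact mul_le_mul_of_nonneg_left (hC j) (hμ0 k j hj)
    _ = C := by rw [← Finset.sum_mul, hμ1 k, one_mul]
  -- correct each block by a small lift of its image to land in the kernel
  let v : ℕ → X := fun k => lift (q (e k))
  have hv : ∀ k, ‖v k‖ ≤ c / 2 := fun k => calc
    ‖v k‖ ≤ K * ‖q (e k)‖ := hlift _
    _ ≤ K * (c / (2 * K)) := by
      gcongr
      simpa [e] using (hμq k).le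
    _ = c / 2 := by field_simp
  refine ⟨e - v, fun k => by simp [v, hqlift], (sub_half c) ▸ he.sub hv, fun k => ?_⟩
  exact (norm_sub_le _ _).trans (add_le_add (heC k) (hv k))

theorem exists_isWeaklyCauchy_subseq_of_isWeaklyCauchy_comp (q : X →L[ℝ] Z) (hq : Surjective q)
    (hY : ¬ EmbedsEllOne (LinearMap.ker (q : X →ₗ[ℝ] Z))) {w : ℕ → X} {C : ℝ}
    (hw : ∀ n, ‖w n‖ ≤ C) (hqw : IsWeaklyCauchy (q ∘ w)) :
    ∃ φ : ℕ → ℕ, StrictMono φ ∧ IsWeaklyCauchy (w ∘ φ) := by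
  refine (exists_weaklyCauchy_or_ellOneLowerBound_subseq hw).resolve_right ?_
  rintro ⟨ψ, c, hψ, hc, hℓ⟩
  obtain ⟨y, hyq, hyℓ, hyC⟩ := exists_ellOneLowerBound_ker_of_tendsto_zero q hq
    (hℓ.pairDiff hc.le) hc (C := C + C) (fun k => norm_sub_le_of_le (hw _) (hw _))
    fun f => by simpa [pairDiff] using (hqw.comp_strictMono hψ).tendsto_pairDiff f
  exact hY (Submodule.embedsEllOne_of_ellOneLowerBound _ hyq hyℓ (half_pos hc) hyC)

end Quotient

section WeaklyPrecompact

variable {E : Type*} [NormedAddCommGroup E] [NormedSpace ℝ E]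

theorem WeaklyPrecompact.isBounded {K : Set E} (hK : WeaklyPrecompact K) :
    Bornology.IsBounded K := by
  rw [isBounded_iff_forall_norm_le]
  by_contra! h
  choose z hzK hz using fun n : ℕ => h n
  obtain ⟨φ, hφ, hcauchy⟩ := hK z hzK
  obtain ⟨C, hC⟩ := IsWeaklyCauchy.exists_norm_le (x := z ∘ φ) hcauchy
  obtain ⟨n, hn⟩ := exists_nat_ge C
  exact (hz (φ n)).not_ge ((hC n).trans (hn.trans (Nat.cast_le.2 hφ.le_apply)))

theorem WeaklyPrecompact.exists_subseq_of_frequently {K : Set E} (hK : WeaklyPrecompact K)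
    {x : ℕ → E} (hx : ∃ᶠ n in atTop, x n ∈ K) :
    ∃ φ : ℕ → ℕ, StrictMono φ ∧ IsWeaklyCauchy (x ∘ φ) := by
  obtain ⟨ψ, hψ, hψK⟩ := extraction_of_frequently_atTop hx
  obtain ⟨φ, hφ, hcauchy⟩ := hK (x ∘ ψ) hψK
  exact ⟨ψ ∘ φ, hψ.comp hφ, hcauchy⟩

theorem WeaklyPrecompact.union {K₁ K₂ : Set E} (h₁ : WeaklyPrecompact K₁)
    (h₂ : WeaklyPrecompact K₂) : WeaklyPrecompact (K₁ ∪ K₂) := by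
  intro x hx
  by_cases hfreq : ∃ᶠ n in atTop, x n ∈ K₁
  · exact h₁.exists_subseq_of_frequently hfreq
  · exact h₂.exists_subseq_of_frequently
      ((not_frequently.1 hfreq).frequently.mono fun n hn => (hx n).resolve_left hn)

theorem Submodule.weaklyPrecompact_of_not_embedsEllOne (Y : Submodule ℝ E) [CompleteSpace Y]
    (hY : ¬ EmbedsEllOne Y) {K : Set E} (hKY : K ⊆ Y) (hK : Bornology.IsBounded K) :
    WeaklyPrecompact K := by
  obtain ⟨C, hC⟩ := isBounded_iff_forall_norm_le.1 hK
  intro x hx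
  refine (exists_weaklyCauchy_or_ellOneLowerBound_subseq fun n => hC _ (hx n)).resolve_right ?_
  rintro ⟨φ, c, -, hc, hℓ⟩
  exact hY (Y.embedsEllOne_of_ellOneLowerBound (fun n => hKY (hx (φ n))) hℓ hc
    fun n => hC _ (hx (φ n)))

theorem Submodule.le_span_inter_closedBall (Y : Submodule ℝ E) :
    Y ≤ Submodule.span ℝ ((Y : Set E) ∩ Metric.closedBall 0 1) := by
  intro y hy
  rcases eq_or_ne y 0 with rfl | hy0
  · exact zero_mem _
  have hmem : ‖y‖⁻¹ • y ∈ (Y : Set E) ∩ Metric.closedBall 0 1 :=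
    ⟨Y.smul_mem _ hy, by simp [norm_smul, hy0]⟩
  simpa [smul_smul, hy0] using Submodule.smul_mem _ ‖y‖ (Submodule.subset_span hmem)

end WeaklyPrecompact

section Quotient

variable {X Z : Type*} [NormedAddCommGroup X] [NormedSpace ℝ X] [CompleteSpace X]
  [NormedAddCommGroup Z] [NormedSpace ℝ Z] [CompleteSpace Z]

theorem WeaklyPrecompact.of_image (q : X →L[ℝ] Z) (hq : Surjective q)
    (hY : ¬ EmbedsEllOne (LinearMap.ker (q : X →ₗ[ℝ] Z))) {G : Set X}
    (hG : Bornology.IsBounded G) (hqG : WeaklyPrecompact (q '' G)) : WeaklyPrecompact G := by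
  obtain ⟨C, hC⟩ := isBounded_iff_forall_norm_le.1 hG
  intro x hx
  obtain ⟨φ, hφ, hqφ⟩ := hqG (q ∘ x) fun n => mem_image_of_mem q (hx n)
  obtain ⟨ψ, hψ, hcauchy⟩ := exists_isWeaklyCauchy_subseq_of_isWeaklyCauchy_comp q hq hY
    (w := x ∘ φ) (fun n => hC _ (hx _)) hqφ
  exact ⟨φ ∘ ψ, hφ.comp hψ, hcauchy⟩

theorem closure_span_eq_univ_of_ker_le (q : X →L[ℝ] Z) (hq : Surjective q) {S : Set X}
    (hker : LinearMap.ker (q : X →ₗ[ℝ] Z) ≤ Submodule.span ℝ S)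
    (hS : closure (Submodule.span ℝ (q '' S) : Set Z) = univ) :
    closure (Submodule.span ℝ S : Set X) = univ := by
  let W := (Submodule.span ℝ S).topologicalClosure
  have hsat : q ⁻¹' (q '' W) = W := by
    refine Subset.antisymm ?_ (subset_preimage_image _ _)
    rintro x ⟨w, hw, hqw⟩
    have hxw : x - w ∈ W := Submodule.le_topologicalClosure _ <| hker <| by simp [hqw]
    simpa using W.add_mem hxw hw
  -- `q` is an open quotient map and `W` is saturated, so `q '' W` is closed
  have hclosed : IsClosed (q '' W) :=
    ((q.isOpenMap hq).isQuotientMap q.continuous hq).isClosed_preimage.1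
      (hsat.symm ▸ (Submodule.span ℝ S).isClosed_topologicalClosure)
  have hspan : (Submodule.span ℝ (q '' S) : Set Z) ⊆ q '' W := by
    change (Submodule.span ℝ ((q : X →ₗ[ℝ] Z) '' S) : Set Z) ⊆ _
    rw [← Submodule.map_span, Submodule.map_coe]
    exact image_mono (Submodule.le_topologicalClosure _)
  rw [← Submodule.topologicalClosure_coe]
  refine eq_univ_of_forall fun x => ?_
  rw [← hsat]
  exact hclosed.closure_subset_iff.2 hspan (hS ▸ mem_univ (q x))

end Quotient

/-- if Y ⊆ X is a closed subspace containing no isomorphic copy of ℓ₁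
and X/Y is WPG, then X is WPG. The quotient X/Y is represented by any Banach space Z
together with a surjective operator q : X → Z with kernel Y. -/
theorem WPG_of_quotient_WPG_of_no_ell1
    {X Z : Type*} [NormedAddCommGroup X] [NormedSpace ℝ X] [CompleteSpace X]
    [NormedAddCommGroup Z] [NormedSpace ℝ Z] [CompleteSpace Z]
    (q : X →L[ℝ] Z) (hq : Function.Surjective q)
    (hY : ¬ ∃ (e : (lp (fun _ : ℕ => ℝ) 1) →L[ℝ] ↥(LinearMap.ker (q : X →ₗ[ℝ] Z))) (c : ℝ), 0 < c ∧
      ∀ v : lp (fun _ : ℕ => ℝ) 1, c * ‖v‖ ≤ ‖e v‖)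
    (hZ : ∃ K : Set Z, WeaklyPrecompact K ∧
      closure ((Submodule.span ℝ K : Submodule ℝ Z) : Set Z) = Set.univ) :
    ∃ K : Set X, WeaklyPrecompact K ∧
      closure ((Submodule.span ℝ K : Submodule ℝ X) : Set X) = Set.univ := by
  obtain ⟨K, hK, hKspan⟩ := hZ
  obtain ⟨R, hR⟩ := isBounded_iff_forall_norm_le.1 hK.isBounded
  obtain ⟨Cq, hCq, hlift⟩ := q.exists_preimage_norm_le hq
  choose u hqu hu using hlift
  let Y := LinearMap.ker (q : X →ₗ[ℝ] Z)
  have hG : WeaklyPrecompact (u '' K) := by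
    refine WeaklyPrecompact.of_image q hq hY (isBounded_iff_forall_norm_le.2 ⟨Cq * R, ?_⟩) ?_
    · rintro _ ⟨z, hz, rfl⟩
      exact (hu z).trans (mul_le_mul_of_nonneg_left (hR z hz) hCq.le)
    · rwa [image_image, funext hqu, image_id']
  have hB : WeaklyPrecompact ((Y : Set X) ∩ Metric.closedBall 0 1) :=
    Y.weaklyPrecompact_of_not_embedsEllOne hY inter_subset_left
      (Metric.isBounded_closedBall.subset inter_subset_right)
  refine ⟨u '' K ∪ (Y ∩ Metric.closedBall 0 1), hG.union hB,
    closure_span_eq_univ_of_ker_le q hq ?_ ?_⟩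
  · exact Y.le_span_inter_closedBall.trans (Submodule.span_mono subset_union_right)
  · refine eq_univ_of_univ_subset (hKspan ▸ closure_mono (Submodule.span_mono ?_))
    exact fun z hz => ⟨u z, Or.inl ⟨z, hz, rfl⟩, hqu z⟩
end
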